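/- arXiv:2501.08595 — 4 statements merged into one kernel-verified Lean document; each statement's English description precedes it below -/
import Mathlib

section
/- The Positive/Negative voting rule, which gives each candidate +1 point per voter ranking them uniquely first and -1 point per voter ranking them uniquely last and elects the candidates with maximal total score, satisfies Neutral Reversal but violates Preferential Equality. -/
/- Formalization of voting with ranked ballots (strict preference ballots).
A profile assigns to each voter in a finite voter set a binary relation
(intended: a strict weak order) on the candidate set `X`. -/

open scoped Classical

noncomputable section

structure Profile (V X : Type*) where
  voters : Finset V
  ballot : V → X → X → Prop

variable {V X α : Type*}

namespace Profile

/-- Number of voters ranking `a` strictly above `b`. -/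
def count (P : Profile V X) (a b : X) : ℕ :=
  (P.voters.filter (fun i => P.ballot i a b)).card

/-- The margin of `a` over `b`. -/
def margin (P : Profile V X) (a b : X) : ℤ :=
  (P.count a b : ℤ) - (P.count b a : ℤ)

/-- Replace the ballot of voter `i` by `R`. -/
def updBallot (P : Profile V X) (i : V) (R : X → X → Prop) : Profile V X :=
  ⟨P.voters, Function.update P.ballot i R⟩

/-- Add a new voter `i` with ballot `R`. -/
def addVoter (P : Profile V X) (i : V) (R : X → X → Prop) : Profile V X :=
  ⟨insert i P.voters, Function.update P.ballot i R⟩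

/-- Double a profile, giving each voter a twin (via the fresh injection `φ`)
with the same ballot. -/
def double [Nonempty V] (P : Profile V X) (φ : V → V) : Profile V X :=
  ⟨P.voters ∪ P.voters.image φ,
    fun i => if i ∈ P.voters then P.ballot i else P.ballot (Function.invFun φ i)⟩

end Profile

/-- `R` is a strict weak order: asymmetric and negatively transitive. -/
def IsSWO (R : X → X → Prop) : Prop :=
  (∀ a b, R a b → ¬ R b a) ∧ (∀ a b c, ¬ R a b → ¬ R b c → ¬ R a c)

/-- `R` is a (strict) linear order. -/
def IsLin (R : X → X → Prop) : Prop :=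
  IsSWO R ∧ ∀ a b, a ≠ b → R a b ∨ R b a

/-- `x` is ranked immediately above `y` in `R`. -/
def ImmAbove (R : X → X → Prop) (x y : X) : Prop :=
  R x y ∧ ∀ z, ¬ (R x z ∧ R z y)

/-- Flip the adjacent pair: `x` above `y` becomes `y` above `x`. -/
def flipPair (R : X → X → Prop) (x y : X) : X → X → Prop := fun a b =>
  if a = x ∧ b = y then False else if a = y ∧ b = x then True else R a b

/-- Voter `i` switches from ranking `x` immediately above `y` to ranking `y`
immediately above `x`. -/
def Profile.flipAt (P : Profile V X) (i : V) (x y : X) : Profile V X :=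
  P.updBallot i (flipPair (P.ballot i) x y)

/-- All voters in `I` switch from ranking `x` immediately above `y` to ranking
`y` immediately above `x`. -/
def Profile.flipSet (P : Profile V X) (I : Finset V) (x y : X) : Profile V X :=
  ⟨P.voters, fun i => if i ∈ I then flipPair (P.ballot i) x y else P.ballot i⟩

/-- The domain of all profiles (of strict weak orders). -/
def SWOProfiles (V X : Type*) : Set (Profile V X) :=
  {P | P.voters.Nonempty ∧ ∀ i ∈ P.voters, IsSWO (P.ballot i)}

/-- The domain of all linear profiles. -/
def LinProfiles (V X : Type*) : Set (Profile V X) :=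
  {P | P.voters.Nonempty ∧ ∀ i ∈ P.voters, IsLin (P.ballot i)}

/-- A linear order with bottom indifference: a strict weak order in which tied
candidates are not ranked strictly above any candidate. -/
def IsLOBI (R : X → X → Prop) : Prop :=
  IsSWO R ∧ ∀ x y, x ≠ y → ¬ R x y → ¬ R y x → ∀ z, ¬ R x z

/-- The LOBI domain. -/
def LOBIProfiles (V X : Type*) : Set (Profile V X) :=
  {P | P.voters.Nonempty ∧ ∀ i ∈ P.voters, IsLOBI (P.ballot i)}

/-- `Y` is a tie (non-singleton indifference class) of `R`. -/
def IsTie (R : X → X → Prop) (Y : Finset X) : Prop :=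
  2 ≤ Y.card ∧ (∀ x ∈ Y, ∀ y ∈ Y, ¬ R x y) ∧
    ∀ z, z ∉ Y → ∀ y ∈ Y, R z y ∨ R y z

/-- `L` is a strict linear order of the members of `Y` (confined to `Y`). -/
def StrictLinOn (L : X → X → Prop) (Y : Finset X) : Prop :=
  (∀ a b, L a b → a ∈ Y ∧ b ∈ Y) ∧ (∀ a, ¬ L a a) ∧
    (∀ a b c, L a b → L b c → L a c) ∧
    ∀ a ∈ Y, ∀ b ∈ Y, a ≠ b → L a b ∨ L b a

/-- Replace the tie `Y` in `R` by the linear order `L` of `Y`. -/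
def breakTie (R : X → X → Prop) (Y : Finset X) (L : X → X → Prop) :
    X → X → Prop := fun a b => R a b ∨ (a ∈ Y ∧ b ∈ Y ∧ L a b)

/-- A domain is rich if it is closed under flipping two adjacent candidates
in a voter's ranking. -/
def Rich (D : Set (Profile V X)) : Prop :=
  ∀ P ∈ D, ∀ i ∈ P.voters, ∀ x y : X,
    ImmAbove (P.ballot i) x y → P.flipAt i x y ∈ D

/-- Preferential Equality. -/
def PrefEqual (D : Set (Profile V X)) (F : Profile V X → α) : Prop :=
  ∀ P ∈ D, ∀ x y : X, ∀ i ∈ P.voters, ∀ j ∈ P.voters, i ≠ j →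
    ImmAbove (P.ballot i) x y → ImmAbove (P.ballot j) x y →
    P.flipAt i x y ∈ D → P.flipAt j x y ∈ D →
    F (P.flipAt i x y) = F (P.flipAt j x y)

/-- Preferential Compensation. -/
def PrefComp (D : Set (Profile V X)) (F : Profile V X → α) : Prop :=
  ∀ P ∈ D, ∀ x y : X, ∀ i ∈ P.voters, ∀ j ∈ P.voters, i ≠ j →
    ImmAbove (P.ballot i) x y → ImmAbove (P.ballot j) y x →
    (P.flipAt i x y).flipAt j y x ∈ D →
    F P = F ((P.flipAt i x y).flipAt j y x)

/-- Neutral Reversal: adding a reversal pair of linear ballots does not change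
the outcome. -/
def NeutralReversal (D : Set (Profile V X)) (F : Profile V X → α) : Prop :=
  ∀ P ∈ D, ∀ i j : V, i ∉ P.voters → j ∉ P.voters → i ≠ j →
    ∀ R : X → X → Prop, IsLin R →
    (P.addVoter i R).addVoter j (fun a b => R b a) ∈ D →
    F P = F ((P.addVoter i R).addVoter j (fun a b => R b a))

/-- Nonlinear Neutral Reversal: adding a reversal pair of strict weak order
ballots does not change the outcome. -/
def NonlinearNeutralReversal (D : Set (Profile V X)) (F : Profile V X → α) : Prop :=
  ∀ P ∈ D, ∀ i j : V, i ∉ P.voters → j ∉ P.voters → i ≠ j →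
    ∀ R : X → X → Prop, IsSWO R →
    (P.addVoter i R).addVoter j (fun a b => R b a) ∈ D →
    F P = F ((P.addVoter i R).addVoter j (fun a b => R b a))

/-- Tiebreaking Compensation. -/
def TiebreakComp (D : Set (Profile V X)) (F : Profile V X → α) : Prop :=
  ∀ P ∈ D, ∀ i ∈ P.voters, ∀ j ∈ P.voters, i ≠ j →
    ∀ (Y : Finset X) (L : X → X → Prop),
    IsTie (P.ballot i) Y → IsTie (P.ballot j) Y → StrictLinOn L Y →
    (P.updBallot i (breakTie (P.ballot i) Y L)).updBallot j
        (breakTie (P.ballot j) Y (fun a b => L b a)) ∈ D →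
    F P = F ((P.updBallot i (breakTie (P.ballot i) Y L)).updBallot j
        (breakTie (P.ballot j) Y (fun a b => L b a)))

/-- Neutral Indifference: adding one voter with the fully indifferent (empty)
ballot does not change the outcome. -/
def NeutralIndifference (D : Set (Profile V X)) (F : Profile V X → α) : Prop :=
  ∀ P ∈ D, ∀ i : V, i ∉ P.voters →
    P.addVoter i (fun _ _ => False) ∈ D →
    F P = F (P.addVoter i (fun _ _ => False))

/-- Homogeneity: doubling the profile (with fresh voters) does not change the
outcome. -/
def Homogeneous [Nonempty V] (D : Set (Profile V X)) (F : Profile V X → α) : Prop :=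
  ∀ P ∈ D, ∀ φ : V → V, Function.Injective φ → (∀ i, φ i ∉ P.voters) →
    P.double φ ∈ D → F P = F (P.double φ)

/-- Head-to-head voting rule: the outcome is determined by the pairwise
support counts together with the number of voters. -/
def HeadToHead (D : Set (Profile V X)) (F : Profile V X → α) : Prop :=
  ∀ P ∈ D, ∀ Q ∈ D, (∀ a b : X, P.count a b = Q.count a b) →
    P.voters.card = Q.voters.card → F P = F Q

/-- C2 voting rule: the outcome is determined by the pairwise support counts. -/
def C2 (D : Set (Profile V X)) (F : Profile V X → α) : Prop :=
  ∀ P ∈ D, ∀ Q ∈ D, (∀ a b : X, P.count a b = Q.count a b) → F P = F Q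

/-- Margin-based voting rule. -/
def MarginBased (D : Set (Profile V X)) (F : Profile V X → α) : Prop :=
  ∀ P ∈ D, ∀ Q ∈ D, (∀ a b : X, P.margin a b = Q.margin a b) → F P = F Q

/-- Positive/Negative score: +1 per voter ranking the candidate uniquely
first, −1 per voter ranking the candidate uniquely last. -/
def pnScore (P : Profile V X) (x : X) : ℤ :=
  ((P.voters.filter (fun i => ∀ y, y ≠ x → P.ballot i x y)).card : ℤ) -
  ((P.voters.filter (fun i => ∀ y, y ≠ x → P.ballot i y x)).card : ℤ)

/-- The Positive/Negative voting rule: candidates of maximal score win. -/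
def PosNeg [Fintype X] (P : Profile V X) : Finset X :=
  Finset.univ.filter (fun x => ∀ y : X, pnScore P y ≤ pnScore P x)


/-! ### Auxiliary lemmas for `stmt14` -/

lemma aux_isLin_key {f : X → ℕ} (hf : Function.Injective f) :
    IsLin (fun a b => f a < f b) := by
  refine ⟨⟨fun a b h1 => by omega, fun a b c h1 h2 => by omega⟩, fun a b hab => ?_⟩
  rcases Nat.lt_or_ge (f a) (f b) with h | h
  · exact Or.inl h
  · rcases Nat.lt_or_ge (f b) (f a) with h' | h'
    · exact Or.inr h'
    · exact absurd (hf (le_antisymm h' h)) hab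

lemma aux_flipPair_iff {R : X → X → Prop} {x y : X} (hxy : x ≠ y) (a b : X) :
    flipPair R x y a b ↔ ((a = y ∧ b = x) ∨ (R a b ∧ ¬(a = x ∧ b = y))) := by
  unfold flipPair
  split_ifs with h1 h2
  · obtain ⟨rfl, rfl⟩ := h1
    simp [hxy]
  · obtain ⟨rfl, rfl⟩ := h2
    simp
  · simp [h1, h2]

lemma aux_isLin_flip {R : X → X → Prop} {x y : X} (hR : IsLin R)
    (hxy : ImmAbove R x y) : IsLin (flipPair R x y) := by
  obtain ⟨⟨asym, negtrans⟩, total⟩ := hR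
  have htrans : ∀ a b c, R a b → R b c → R a c := by
    intro a b c h1 h2
    by_contra h
    exact negtrans a c b h (asym b c h2) h1
  have hne : x ≠ y := by
    rintro rfl
    exact asym _ _ hxy.1 hxy.1
  have hiff := aux_flipPair_iff (R := R) hne
  have strans : ∀ a b c, flipPair R x y a b → flipPair R x y b c → flipPair R x y a c := by
    intro a b c hab hbc
    rw [hiff] at hab hbc ⊢
    rcases hab with ⟨hay, hbx⟩ | ⟨hab, hf1⟩
    · rw [hbx] at hbc
      rw [hay]
      rcases hbc with ⟨hxy', _⟩ | ⟨hbc, hf2⟩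
      · exact absurd hxy' hne
      · have hcy : c ≠ y := fun h => hf2 ⟨rfl, h⟩
        rcases total y c hcy.symm with h | h
        · exact Or.inr ⟨h, fun hc => hne hc.1.symm⟩
        · exact absurd ⟨hbc, h⟩ (hxy.2 c)
    · rcases hbc with ⟨hby, hcx⟩ | ⟨hbc, hf2⟩
      · rw [hby] at hab
        rw [hcx]
        have hax : a ≠ x := fun h => hf1 ⟨h, hby⟩
        refine Or.inr ⟨?_, fun hc => hne hc.2⟩
        rcases total a x hax with h | h
        · exact h
        · exact absurd ⟨h, hab⟩ (hxy.2 a)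
      · refine Or.inr ⟨htrans _ _ _ hab hbc, ?_⟩
        rintro ⟨hax, hcy⟩
        rw [hax] at hab
        rw [hcy] at hbc
        exact hxy.2 b ⟨hab, hbc⟩
  have sasym : ∀ a b, flipPair R x y a b → ¬ flipPair R x y b a := by
    intro a b h1 h2
    rw [hiff] at h1 h2
    rcases h1 with ⟨hay, hbx⟩ | ⟨h1, hf1⟩ <;> rcases h2 with ⟨hby, hax⟩ | ⟨h2', hf2⟩
    · exact hne (hbx.symm.trans hby)
    · exact hf2 ⟨hbx, hay⟩
    · exact hf1 ⟨hax, hby⟩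
    · exact asym a b h1 h2'
  have stotal : ∀ a b : X, a ≠ b → flipPair R x y a b ∨ flipPair R x y b a := by
    intro a b hab
    rw [hiff, hiff]
    by_cases h1 : a = x ∧ b = y
    · exact Or.inr (Or.inl ⟨h1.2, h1.1⟩)
    · by_cases h2 : a = y ∧ b = x
      · exact Or.inl (Or.inl h2)
      · rcases total a b hab with h | h
        · exact Or.inl (Or.inr ⟨h, h1⟩)
        · exact Or.inr (Or.inr ⟨h, fun hc => h2 ⟨hc.2, hc.1⟩⟩)
  refine ⟨⟨sasym, ?_⟩, stotal⟩
  intro a b c hnab hnbc hac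
  by_cases hab : a = b
  · rw [hab] at hac; exact hnbc hac
  by_cases hbc : b = c
  · rw [← hbc] at hac; exact hnab hac
  rcases stotal a b hab with h | hba
  · exact hnab h
  rcases stotal b c hbc with h | hcb
  · exact hnbc h
  exact sasym a c hac (strans c b a hcb hba)

lemma aux_card_filter_pair {i j : V} (hij : i ≠ j) (p : V → Prop) [DecidablePred p] :
    (({i, j} : Finset V).filter p).card
      = (if p i then 1 else 0) + (if p j then 1 else 0) := by
  have hi' : i ∉ ({j} : Finset V) := by simp [hij]
  rw [show ({i, j} : Finset V) = insert i {j} from rfl, Finset.filter_insert,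
    Finset.filter_singleton]
  have hmem : i ∉ Finset.filter p {j} := fun h => hi' (Finset.mem_filter.1 h).1
  split_ifs <;> simp_all [Finset.card_insert_of_notMem]

lemma aux_card_filter_insert2 {S : Finset V} {i j : V} (hi : i ∉ S) (hj : j ∉ S)
    (hij : i ≠ j) (p : V → Prop) [DecidablePred p] :
    ((insert j (insert i S)).filter p).card
      = (S.filter p).card + (if p i then 1 else 0) + (if p j then 1 else 0) := by
  have hi' : i ∉ S.filter p := fun h => hi (Finset.mem_filter.1 h).1
  have hj' : j ∉ (insert i S).filter p := fun h => by
    rcases Finset.mem_insert.1 (Finset.mem_filter.1 h).1 with h' | h'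
    · exact hij h'.symm
    · exact hj h'
  have h1 : ((insert i S).filter p).card = (S.filter p).card + (if p i then 1 else 0) := by
    rw [Finset.filter_insert]
    split_ifs
    · rw [Finset.card_insert_of_notMem hi']
    · omega
  have h2 : ((insert j (insert i S)).filter p).card
      = ((insert i S).filter p).card + (if p j then 1 else 0) := by
    rw [Finset.filter_insert]
    split_ifs
    · rw [Finset.card_insert_of_notMem hj']
    · omega
  rw [h2, h1]

lemma aux_pn_pair {i j : V} (hij : i ≠ j) (b : V → X → X → Prop) (c : X)
    {Ti Tj Bi Bj : Prop}
    (h1 : (∀ a, a ≠ c → b i c a) ↔ Ti) (h2 : (∀ a, a ≠ c → b j c a) ↔ Tj)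
    (h3 : (∀ a, a ≠ c → b i a c) ↔ Bi) (h4 : (∀ a, a ≠ c → b j a c) ↔ Bj) :
    pnScore (⟨{i, j}, b⟩ : Profile V X) c
      = ((if Ti then 1 else 0) + (if Tj then 1 else 0))
        - ((if Bi then 1 else 0) + (if Bj then 1 else 0)) := by
  have hps : pnScore (⟨{i, j}, b⟩ : Profile V X) c
      = ((({i, j} : Finset V).filter (fun v => ∀ a, a ≠ c → b v c a)).card : ℤ)
        - ((({i, j} : Finset V).filter (fun v => ∀ a, a ≠ c → b v a c)).card : ℤ) := by
    unfold pnScore; rfl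
  rw [hps]
  simp only [aux_card_filter_pair hij]
  push_cast
  rw [if_congr h1 rfl rfl, if_congr h2 rfl rfl, if_congr h3 rfl rfl, if_congr h4 rfl rfl]

/-- The permutation of positions used for the second voter in the proof of
`stmt14`: it cyclically permutes the positions `0, 1, 2`. -/
def auxP (m : ℕ) : ℕ := if m = 0 then 1 else if m = 1 then 2 else if m = 2 then 0 else m

lemma aux_part2 [Fintype X] {i j : V} (hij : i ≠ j)
    (k : X → ℕ) (hk : Function.Injective k) {N : ℕ} (hN : 4 ≤ N)
    (hlt : ∀ a, k a < N)
    {x y z w : X} (hx : k x = 0) (hy : k y = 1) (hz : k z = 2) (hw : k w = N - 1) :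
    ¬ PrefEqual (LinProfiles V X) (PosNeg (V := V) (X := X)) := by
  intro hPE
  have hji : j ≠ i := hij.symm
  have hp_inj : Function.Injective auxP := by
    intro a b h
    simp only [auxP] at h
    split_ifs at h <;> omega
  have hkd : ∀ {a b : X}, k a ≠ k b → a ≠ b := fun h hab => h (congrArg k hab)
  have hxy : x ≠ y := hkd (by omega)
  have hxz : x ≠ z := hkd (by omega)
  have hxw : x ≠ w := hkd (by omega)
  have hyz : y ≠ z := hkd (by omega)
  have hyw : y ≠ w := hkd (by omega)
  have hzw : z ≠ w := hkd (by omega)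
  have hpx : auxP (k x) = 1 := by rw [hx]; simp [auxP]
  have hpy : auxP (k y) = 2 := by rw [hy]; simp [auxP]
  have hpz : auxP (k z) = 0 := by rw [hz]; simp [auxP]
  have hpw : auxP (k w) = N - 1 := by
    rw [hw]; simp only [auxP]; split_ifs <;> omega
  have hplt : ∀ a, auxP (k a) < N := by
    intro a
    have := hlt a
    simp only [auxP]; split_ifs <;> omega
  set Ri : X → X → Prop := fun a b => k a < k b with hRi
  set Rj : X → X → Prop := fun a b => auxP (k a) < auxP (k b) with hRj
  have linRi : IsLin Ri := aux_isLin_key hk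
  have linRj : IsLin Rj := aux_isLin_key (fun a b h => hk (hp_inj h))
  have IAi : ImmAbove Ri x y := by
    constructor
    · show k x < k y; omega
    · intro c hc
      have h1 : k x < k c := hc.1
      have h2 : k c < k y := hc.2
      omega
  have IAj : ImmAbove Rj x y := by
    constructor
    · show auxP (k x) < auxP (k y); omega
    · intro c hc
      have h1 : auxP (k x) < auxP (k c) := hc.1
      have h2 : auxP (k c) < auxP (k y) := hc.2
      omega
  -- top/bottom characterizations
  have TRi : ∀ c : X, (∀ a, a ≠ c → Ri c a) ↔ c = x := by
    intro c
    constructor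
    · intro h
      by_contra hc
      have h1 : k c < k x := h x (fun h' => hc h'.symm)
      omega
    · intro hce
      rw [hce]
      intro a ha
      show k x < k a
      have : k a ≠ k x := fun h' => ha (hk h')
      omega
  have BRi : ∀ c : X, (∀ a, a ≠ c → Ri a c) ↔ c = w := by
    intro c
    constructor
    · intro h
      by_contra hc
      have h1 : k w < k c := h w (fun h' => hc h'.symm)
      have := hlt c
      omega
    · intro hce
      rw [hce]
      intro a ha
      show k a < k w
      have h1 : k a ≠ k w := fun h' => ha (hk h')
      have := hlt a
      omega
  have TRj : ∀ c : X, (∀ a, a ≠ c → Rj c a) ↔ c = z := by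
    intro c
    constructor
    · intro h
      by_contra hc
      have h1 : auxP (k c) < auxP (k z) := h z (fun h' => hc h'.symm)
      omega
    · intro hce
      rw [hce]
      intro a ha
      show auxP (k z) < auxP (k a)
      have h1 : auxP (k a) ≠ auxP (k z) := fun h' => ha (hk (hp_inj h'))
      omega
  have BRj : ∀ c : X, (∀ a, a ≠ c → Rj a c) ↔ c = w := by
    intro c
    constructor
    · intro h
      by_contra hc
      have h1 : auxP (k w) < auxP (k c) := h w (fun h' => hc h'.symm)
      have := hplt c
      omega
    · intro hce
      rw [hce]
      intro a ha
      show auxP (k a) < auxP (k w)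
      have h1 : auxP (k a) ≠ auxP (k w) := fun h' => ha (hk (hp_inj h'))
      have := hplt a
      omega
  have TSi : ∀ c : X, (∀ a, a ≠ c → flipPair Ri x y c a) ↔ c = y := by
    intro c
    constructor
    · intro h
      by_contra hc
      have h1 := h y (fun h' => hc h'.symm)
      rw [aux_flipPair_iff hxy] at h1
      rcases h1 with ⟨hcy, _⟩ | ⟨h1, hf⟩
      · exact hc hcy
      · have h1' : k c < k y := h1
        exact hf ⟨hk (by omega), rfl⟩
    · intro hce
      rw [hce]
      intro a ha
      rw [aux_flipPair_iff hxy]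
      by_cases hax : a = x
      · exact Or.inl ⟨rfl, hax⟩
      · refine Or.inr ⟨?_, fun hcc => hxy hcc.1.symm⟩
        show k y < k a
        have h1 : k a ≠ k x := fun h' => hax (hk h')
        have h2 : k a ≠ k y := fun h' => ha (hk h')
        omega
  have BSi : ∀ c : X, (∀ a, a ≠ c → flipPair Ri x y a c) ↔ c = w := by
    intro c
    constructor
    · intro h
      by_contra hc
      have h1 := h w (fun h' => hc h'.symm)
      rw [aux_flipPair_iff hxy] at h1
      rcases h1 with ⟨hwy, _⟩ | ⟨h1, _⟩
      · exact hyw hwy.symm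
      · have h1' : k w < k c := h1
        have := hlt c
        omega
    · intro hce
      rw [hce]
      intro a ha
      rw [aux_flipPair_iff hxy]
      refine Or.inr ⟨?_, fun hcc => hyw hcc.2.symm⟩
      show k a < k w
      have h1 : k a ≠ k w := fun h' => ha (hk h')
      have := hlt a
      omega
  have TSj : ∀ c : X, (∀ a, a ≠ c → flipPair Rj x y c a) ↔ c = z := by
    intro c
    constructor
    · intro h
      by_contra hc
      have h1 := h z (fun h' => hc h'.symm)
      rw [aux_flipPair_iff hxy] at h1
      rcases h1 with ⟨_, hzx⟩ | ⟨h1, _⟩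
      · exact hxz hzx.symm
      · have h1' : auxP (k c) < auxP (k z) := h1
        omega
    · intro hce
      rw [hce]
      intro a ha
      rw [aux_flipPair_iff hxy]
      refine Or.inr ⟨?_, fun hcc => hxz hcc.1.symm⟩
      show auxP (k z) < auxP (k a)
      have h1 : auxP (k a) ≠ auxP (k z) := fun h' => ha (hk (hp_inj h'))
      omega
  have BSj : ∀ c : X, (∀ a, a ≠ c → flipPair Rj x y a c) ↔ c = w := by
    intro c
    constructor
    · intro h
      by_contra hc
      have h1 := h w (fun h' => hc h'.symm)
      rw [aux_flipPair_iff hxy] at h1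
      rcases h1 with ⟨hwy, _⟩ | ⟨h1, _⟩
      · exact hyw hwy.symm
      · have h1' : auxP (k w) < auxP (k c) := h1
        have := hplt c
        omega
    · intro hce
      rw [hce]
      intro a ha
      rw [aux_flipPair_iff hxy]
      refine Or.inr ⟨?_, fun hcc => hyw hcc.2.symm⟩
      show auxP (k a) < auxP (k w)
      have h1 : auxP (k a) ≠ auxP (k w) := fun h' => ha (hk (hp_inj h'))
      have := hplt a
      omega
  -- the profile
  set bal : V → X → X → Prop := Function.update (fun _ => Rj) i Ri with hbal
  have hbi : bal i = Ri := Function.update_self _ _ _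
  have hbj : bal j = Rj := Function.update_of_ne hji _ _
  set P : Profile V X := ⟨{i, j}, bal⟩ with hP
  set Pi : Profile V X := ⟨{i, j}, Function.update bal i (flipPair Ri x y)⟩ with hPi
  set Pj : Profile V X := ⟨{i, j}, Function.update bal j (flipPair Rj x y)⟩ with hPj
  have hPmem : P ∈ LinProfiles V X := by
    refine ⟨⟨i, ?_⟩, ?_⟩
    · rw [hP]; exact Finset.mem_insert_self _ _
    · intro v hv
      rw [hP]
      show IsLin (bal v)
      by_cases hvi : v = i
      · rw [hvi, hbi]; exact linRi
      · rw [hbal, Function.update_of_ne hvi]; exact linRj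
  have hPimem : Pi ∈ LinProfiles V X := by
    refine ⟨⟨i, ?_⟩, ?_⟩
    · rw [hPi]; exact Finset.mem_insert_self _ _
    · intro v hv
      rw [hPi]
      show IsLin (Function.update bal i (flipPair Ri x y) v)
      by_cases hvi : v = i
      · rw [hvi, Function.update_self]
        exact aux_isLin_flip linRi IAi
      · rw [Function.update_of_ne hvi, hbal, Function.update_of_ne hvi]
        exact linRj
  have hPjmem : Pj ∈ LinProfiles V X := by
    refine ⟨⟨i, ?_⟩, ?_⟩
    · rw [hPj]; exact Finset.mem_insert_self _ _
    · intro v hv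
      rw [hPj]
      show IsLin (Function.update bal j (flipPair Rj x y) v)
      by_cases hvj : v = j
      · rw [hvj, Function.update_self]
        exact aux_isLin_flip linRj IAj
      · rw [Function.update_of_ne hvj, hbal]
        by_cases hvi : v = i
        · rw [hvi, Function.update_self]; exact linRi
        · rw [Function.update_of_ne hvi]; exact linRj
  have hfi : P.flipAt i x y = Pi := by
    rw [hP, hPi]
    show Profile.mk {i, j} (Function.update bal i (flipPair (bal i) x y)) = _
    rw [hbi]
  have hfj : P.flipAt j x y = Pj := by
    rw [hP, hPj]
    show Profile.mk {i, j} (Function.update bal j (flipPair (bal j) x y)) = _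
    rw [hbj]
  have sPi : ∀ c, pnScore Pi c
      = ((if c = y then 1 else 0) + (if c = z then 1 else 0))
        - ((if c = w then 1 else 0) + (if c = w then 1 else 0)) := by
    intro c
    rw [hPi]
    refine aux_pn_pair hij _ c ?_ ?_ ?_ ?_
    · rw [Function.update_self]; exact TSi c
    · rw [Function.update_of_ne hji, hbj]; exact TRj c
    · rw [Function.update_self]; exact BSi c
    · rw [Function.update_of_ne hji, hbj]; exact BRj c
  have sPj : ∀ c, pnScore Pj c
      = ((if c = x then 1 else 0) + (if c = z then 1 else 0))
        - ((if c = w then 1 else 0) + (if c = w then 1 else 0)) := by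
    intro c
    rw [hPj]
    refine aux_pn_pair hij _ c ?_ ?_ ?_ ?_
    · rw [Function.update_of_ne hij, hbi]; exact TRi c
    · rw [Function.update_self]; exact TSj c
    · rw [Function.update_of_ne hij, hbi]; exact BRi c
    · rw [Function.update_self]; exact BSj c
  have hmem_i : i ∈ P.voters := by rw [hP]; exact Finset.mem_insert_self _ _
  have hmem_j : j ∈ P.voters := by
    rw [hP]; exact Finset.mem_insert_of_mem (Finset.mem_singleton_self _)
  have hIAi' : ImmAbove (P.ballot i) x y := by
    rw [hP]; show ImmAbove (bal i) x y; rw [hbi]; exact IAi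
  have hIAj' : ImmAbove (P.ballot j) x y := by
    rw [hP]; show ImmAbove (bal j) x y; rw [hbj]; exact IAj
  have hEq := hPE P hPmem x y i hmem_i j hmem_j hij hIAi' hIAj'
    (by rw [hfi]; exact hPimem) (by rw [hfj]; exact hPjmem)
  rw [hfi, hfj] at hEq
  have sPjx : pnScore Pj x = 1 := by
    rw [sPj x, if_pos rfl, if_neg hxz, if_neg hxw]
    norm_num
  have sPix : pnScore Pi x = 0 := by
    rw [sPi x, if_neg hxy, if_neg hxz, if_neg hxw]
    norm_num
  have sPiy : pnScore Pi y = 1 := by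
    rw [sPi y, if_pos rfl, if_neg hyz, if_neg hyw]
    norm_num
  have hxj : x ∈ PosNeg Pj := by
    simp only [PosNeg, Finset.mem_filter, Finset.mem_univ, true_and]
    intro c
    rw [sPj c, sPjx]
    by_cases h1 : c = x
    · rw [if_pos h1, h1, if_neg hxz, if_neg hxw]
      norm_num
    · rw [if_neg h1]
      split_ifs <;> omega
  have hxi : x ∉ PosNeg Pi := by
    simp only [PosNeg, Finset.mem_filter, Finset.mem_univ, true_and]
    intro hall
    have := hall y
    rw [sPiy, sPix] at this
    omega
  exact hxi (by rw [hEq]; exact hxj)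

/-- the Positive/Negative rule satisfies Neutral Reversal but
violates Preferential Equality. -/
theorem stmt14 [Infinite V] [Fintype X] (hX : 4 ≤ Fintype.card X) :
    NeutralReversal (LinProfiles V X) (PosNeg (V := V) (X := X)) ∧
    ¬ PrefEqual (LinProfiles V X) (PosNeg (V := V) (X := X)) := by
  constructor
  · -- Neutral Reversal
    intro P hP i j hi hj hij R hR hQ
    have key : ∀ q : (X → X → Prop) → Prop,
        ((((P.addVoter i R).addVoter j (fun a b => R b a)).voters.filter
            (fun v => q (((P.addVoter i R).addVoter j (fun a b => R b a)).ballot v))).card : ℤ)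
          = ((P.voters.filter (fun v => q (P.ballot v))).card : ℤ)
            + (if q R then 1 else 0) + (if q (fun a b => R b a) then 1 else 0) := by
      intro q
      have e1 : Function.update (Function.update P.ballot i R) j (fun a b => R b a) i = R := by
        rw [Function.update_of_ne hij, Function.update_self]
      have e2 : Function.update (Function.update P.ballot i R) j (fun a b => R b a) j
          = (fun a b => R b a) := Function.update_self _ _ _
      have e3 : ∀ v ∈ P.voters,
          Function.update (Function.update P.ballot i R) j (fun a b => R b a) v
            = P.ballot v := by
        intro v hv
        rw [Function.update_of_ne (fun h => hj (by rwa [h] at hv)),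
          Function.update_of_ne (fun h => hi (by rwa [h] at hv))]
      have e4 : P.voters.filter
            (fun v => q (Function.update (Function.update P.ballot i R) j
              (fun a b => R b a) v))
          = P.voters.filter (fun v => q (P.ballot v)) :=
        Finset.filter_congr (fun v hv => iff_of_eq (congrArg q (e3 v hv)))
      have hshow : ((((P.addVoter i R).addVoter j (fun a b => R b a)).voters.filter
            (fun v => q (((P.addVoter i R).addVoter j (fun a b => R b a)).ballot v))).card : ℤ)
          = (((insert j (insert i P.voters)).filter
            (fun v => q (Function.update (Function.update P.ballot i R) j
              (fun a b => R b a) v))).card : ℤ) := by rfl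
      rw [hshow]
      simp only [aux_card_filter_insert2 hi hj hij]
      rw [e1, e2, e4]
      push_cast
      ring
    have hscore : ∀ c, pnScore ((P.addVoter i R).addVoter j (fun a b => R b a)) c
        = pnScore P c := by
      intro c
      have h1 := key (fun b => ∀ u, u ≠ c → b c u)
      have h2 := key (fun b => ∀ u, u ≠ c → b u c)
      simp only at h1 h2
      unfold pnScore
      rw [h1, h2]
      ring
    unfold PosNeg
    exact Finset.filter_congr (fun c _ => by simp only [hscore])
  · obtain ⟨i, j, hij⟩ := exists_pair_ne V
    exact aux_part2 hij (fun a => ((Fintype.equivFin X) a : ℕ))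
      (fun a b h => (Fintype.equivFin X).injective (Fin.ext h))
      hX (fun a => ((Fintype.equivFin X) a).2)
      (x := (Fintype.equivFin X).symm ⟨0, by omega⟩)
      (y := (Fintype.equivFin X).symm ⟨1, by omega⟩)
      (z := (Fintype.equivFin X).symm ⟨2, by omega⟩)
      (w := (Fintype.equivFin X).symm ⟨Fintype.card X - 1, by omega⟩)
      (by simp) (by simp) (by simp) (by simp)

end
end

section
/- The version of the Borda count for strict weak orders in which candidate x receives from each voter a number of points equal to the number of candidates x is strictly preferred to, and the candidates with most total points win, satisfies Neutral Reversal but violates Nonlinear Neutral Reversal. -/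
/- Formalization of voting with ranked ballots (strict preference ballots).
A profile assigns to each voter in a finite voter set a binary relation
(intended: a strict weak order) on the candidate set `X`. -/

open scoped Classical

noncomputable section

variable {V X α : Type*}

/-- Borda score for strict weak orders: a candidate receives from each voter
one point per candidate it is strictly preferred to. -/
def bordaScore [Fintype X] (P : Profile V X) (x : X) : ℕ :=
  ∑ i ∈ P.voters, (Finset.univ.filter (fun y => P.ballot i x y)).card

/-- The Borda rule for strict weak orders: candidates with most points win. -/
def Borda [Fintype X] (P : Profile V X) : Finset X :=
  Finset.univ.filter (fun x => ∀ y : X, bordaScore P y ≤ bordaScore P x)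

lemma score_addVoter [Fintype X] (P : Profile V X) (i : V) (R : X → X → Prop)
    (hi : i ∉ P.voters) (x : X) :
    bordaScore (P.addVoter i R) x
      = bordaScore P x + (Finset.univ.filter (fun y => R x y)).card := by
  unfold bordaScore Profile.addVoter
  dsimp only
  rw [Finset.sum_insert hi]; simp only [Function.update_self]; rw [add_comm]
  congr 1
  refine Finset.sum_congr rfl fun k hk => ?_
  have hki : k ≠ i := fun h => hi (h ▸ hk)
  simp only [Function.update_of_ne hki]

lemma lin_count [Fintype X] {R : X → X → Prop} (hR : IsLin R) (x : X) :
    (Finset.univ.filter (fun y => R x y)).card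
      + (Finset.univ.filter (fun y => R y x)).card = Fintype.card X - 1 := by
  have hirr : ∀ z, ¬ R z z := fun z h => hR.1.1 z z h h
  have hdisj : Disjoint (Finset.univ.filter (fun y => R x y))
      (Finset.univ.filter (fun y => R y x)) := by
    rw [Finset.disjoint_left]
    intro y h1 h2
    simp only [Finset.mem_filter] at h1 h2
    exact hR.1.1 x y h1.2 h2.2
  have hunion : Finset.univ.filter (fun y => R x y)
      ∪ Finset.univ.filter (fun y => R y x) = Finset.univ.erase x := by
    ext y
    simp only [Finset.mem_union, Finset.mem_filter, Finset.mem_univ, true_and,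
      Finset.mem_erase, and_true]
    constructor
    · rintro (h | h) rfl <;> exact hirr _ h
    · intro h; exact hR.2 x y (Ne.symm h)
  rw [← Finset.card_union_of_disjoint hdisj, hunion,
    Finset.card_erase_of_mem (Finset.mem_univ x), Finset.card_univ]

lemma score_empty [Fintype X] (v : Finset V) (x : X) :
    bordaScore (⟨v, fun _ _ _ => False⟩ : Profile V X) x = 0 := by
  simp [bordaScore]

lemma IsSWO.rev' {R : X → X → Prop} (h : IsSWO R) : IsSWO (fun a b => R b a) :=
  ⟨fun a b hab => h.1 b a hab, fun a b c h1 h2 => h.2 c b a h2 h1⟩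

/-- the Borda rule for strict weak orders satisfies Neutral
Reversal but violates Nonlinear Neutral Reversal. -/
theorem stmt15 [Infinite V] [Fintype X] (hX : 3 ≤ Fintype.card X) :
    NeutralReversal (SWOProfiles V X) (Borda (V := V) (X := X)) ∧
    ¬ NonlinearNeutralReversal (SWOProfiles V X) (Borda (V := V) (X := X)) := by
  constructor
  · intro P hP i j hi hj hij R hR _
    have hji : j ∉ (P.addVoter i R).voters := by
      simp only [Profile.addVoter, Finset.mem_insert, not_or]
      exact ⟨hij.symm, hj⟩
    have hscore : ∀ x, bordaScore ((P.addVoter i R).addVoter j (fun a b => R b a)) x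
        = bordaScore P x + (Fintype.card X - 1) := by
      intro x
      rw [score_addVoter _ _ _ hji, score_addVoter _ _ _ hi]
      rw [add_assoc, lin_count hR]
    unfold Borda
    ext x
    simp only [Finset.mem_filter, Finset.mem_univ, true_and]
    constructor
    · intro h y; rw [hscore, hscore]; exact Nat.add_le_add_right (h y) _
    · intro h y
      have := h y
      rw [hscore, hscore] at this
      omega
  · intro hNNR
    -- candidates
    have hnt : Nontrivial X := Fintype.one_lt_card_iff_nontrivial.mp (by omega)
    obtain ⟨a, b, hab⟩ := hnt.exists_pair_ne
    -- voters
    obtain ⟨i0⟩ : Nonempty V := inferInstance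
    obtain ⟨i, hi⟩ := Infinite.exists_notMem_finset ({i0} : Finset V)
    obtain ⟨j, hj⟩ := Infinite.exists_notMem_finset ({i0, i} : Finset V)
    simp only [Finset.mem_singleton] at hi
    simp only [Finset.mem_insert, Finset.mem_singleton, not_or] at hj
    set P : Profile V X := ⟨{i0}, fun _ _ _ => False⟩ with hPdef
    have hPmem : P ∈ SWOProfiles V X := by
      refine ⟨Finset.singleton_nonempty i0, fun k _ => ⟨fun _ _ h => h.elim, fun _ _ _ _ _ h => h⟩⟩
    set S : X → X → Prop := fun x y => x = a ∧ y ≠ a with hSdef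
    have hS : IsSWO S := by
      constructor
      · rintro x y ⟨hx, hy⟩ ⟨hy', _⟩; exact hy hy'
      · rintro x y z hxy hyz ⟨hx, hz⟩
        by_cases hya : y = a
        · exact hyz ⟨hya, hz⟩
        · exact hxy ⟨hx, hya⟩
    have hiP : i ∉ P.voters := fun h => hi (Finset.mem_singleton.mp h)
    have hjP : j ∉ P.voters := fun h => hj.1 (Finset.mem_singleton.mp h)
    have hij : i ≠ j := fun h => hj.2 h.symm
    set Q : Profile V X := (P.addVoter i S).addVoter j (fun x y => S y x) with hQdef
    have hjQ : j ∉ (P.addVoter i S).voters := by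
      simp only [Profile.addVoter, Finset.mem_insert, not_or]
      exact ⟨hj.2, hjP⟩
    have hQmem : Q ∈ SWOProfiles V X := by
      constructor
      · exact ⟨j, Finset.mem_insert_self j _⟩
      · intro k _
        simp only [hQdef, Profile.addVoter]
        by_cases hkj : k = j
        · subst hkj; rw [Function.update_self]; exact hS.rev'
        · rw [Function.update_of_ne hkj]
          by_cases hki : k = i
          · subst hki; rw [Function.update_self]; exact hS
          · rw [Function.update_of_ne hki]
            exact ⟨fun _ _ h => h.elim, fun _ _ _ _ _ h => h⟩
    -- scores
    have hP0 : ∀ x, bordaScore P x = 0 := fun x => score_empty {i0} x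
    have hQscore : ∀ x, bordaScore Q x = bordaScore P x
        + (Finset.univ.filter (fun y => S x y)).card
        + (Finset.univ.filter (fun y => S y x)).card := by
      intro x
      rw [hQdef, score_addVoter _ _ _ hjQ, score_addVoter _ _ _ hiP]
      congr!
    have hQa : bordaScore Q a = Fintype.card X - 1 := by
      rw [hQscore, hP0]
      have h1 : (Finset.univ.filter (fun y => S a y)) = Finset.univ.erase a := by
        ext y
        simp only [hSdef, Finset.mem_filter, Finset.mem_univ, true_and,
          Finset.mem_erase, and_true]
      have h2 : (Finset.univ.filter (fun y => S y a)) = ∅ := by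
        ext y
        simp [hSdef]
      rw [h1, h2, Finset.card_erase_of_mem (Finset.mem_univ a), Finset.card_univ]
      simp
    have hQb : bordaScore Q b = 1 := by
      rw [hQscore, hP0]
      have h1 : (Finset.univ.filter (fun y => S b y)) = ∅ := by
        ext y
        simp only [hSdef, Finset.mem_filter, Finset.mem_univ, true_and,
          Finset.notMem_empty, iff_false]
        rintro ⟨hba, _⟩
        exact hab hba.symm
      have h2 : (Finset.univ.filter (fun y => S y b)) = {a} := by
        ext y
        simp only [hSdef, Finset.mem_filter, Finset.mem_univ, true_and,
          Finset.mem_singleton]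
        constructor
        · rintro ⟨h, _⟩; exact h
        · rintro rfl; exact ⟨rfl, fun h => hab h.symm⟩
      rw [h1, h2]
      simp
    have heq := hNNR P hPmem i j hiP hjP hij S hS hQmem
    have hbP : b ∈ Borda P := by
      simp only [Borda, Finset.mem_filter, Finset.mem_univ, true_and]
      intro y; rw [hP0, hP0]
    rw [heq] at hbP
    simp only [Borda, Finset.mem_filter, Finset.mem_univ, true_and] at hbP
    have := hbP a
    rw [hQa, hQb] at this
    omega

end
end

section
/- Let F be a head-to-head voting rule on the domain WOSN (weak orders plus side-noncomparability). Then F is margin-based if and only if F satisfies Neutral Self-Reversal and Nonlinear Neutral Reversal. -/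
/- Formalization of voting with weak-preference ballots (binary relations
allowing noncomparability).  A profile assigns to each voter in a finite
voter set a binary (weak preference) relation on the candidate set `X`. -/

open scoped Classical

noncomputable section

variable {V X α : Type*}

/-- Strict preference induced by the weak relation `R`. -/
def sPref (R : X → X → Prop) (x y : X) : Prop := R x y ∧ ¬ R y x

/-- Indifference induced by the weak relation `R`. -/
def sIndiff (R : X → X → Prop) (x y : X) : Prop := R x y ∧ R y x

/-- Noncomparability induced by the weak relation `R`. -/
def sNoncomp (R : X → X → Prop) (x y : X) : Prop := ¬ R x y ∧ ¬ R y x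

/-- Number of voters strictly preferring `a` to `b`. -/
def Profile.countP (P : Profile V X) (a b : X) : ℕ :=
  (P.voters.filter (fun i => sPref (P.ballot i) a b)).card

/-- Number of voters indifferent between `a` and `b`. -/
def Profile.countI (P : Profile V X) (a b : X) : ℕ :=
  (P.voters.filter (fun i => sIndiff (P.ballot i) a b)).card

/-- Number of voters finding `a` and `b` noncomparable. -/
def Profile.countN (P : Profile V X) (a b : X) : ℕ :=
  (P.voters.filter (fun i => sNoncomp (P.ballot i) a b)).card

/-- The margin of `a` over `b`. -/
def Profile.marginW (P : Profile V X) (a b : X) : ℤ :=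
  (P.countP a b : ℤ) - (P.countP b a : ℤ)

/-- The side-noncomparability class of `R`: the candidates noncomparable with
all other candidates. -/
def sideClass (R : X → X → Prop) : Set X :=
  {x | ∀ y, y ≠ x → sNoncomp R x y}

/-- Linear order plus side-noncomparability. -/
def IsLOSN (R : X → X → Prop) : Prop :=
  Reflexive R ∧ Transitive R ∧
    ∀ x y, x ≠ y → x ∉ sideClass R → y ∉ sideClass R →
      sPref R x y ∨ sPref R y x

/-- Weak order plus side-noncomparability. -/
def IsWOSN (R : X → X → Prop) : Prop :=
  Reflexive R ∧ Transitive R ∧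
    ∀ x y, x ∉ sideClass R → y ∉ sideClass R → R x y ∨ R y x

/-- The LOSN domain. -/
def LOSNProfiles (V X : Type*) : Set (Profile V X) :=
  {P | P.voters.Nonempty ∧ ∀ i ∈ P.voters, IsLOSN (P.ballot i)}

/-- The WOSN domain. -/
def WOSNProfiles (V X : Type*) : Set (Profile V X) :=
  {P | P.voters.Nonempty ∧ ∀ i ∈ P.voters, IsWOSN (P.ballot i)}

/-- Margin-based voting rule. -/
def MarginBasedW (D : Set (Profile V X)) (F : Profile V X → α) : Prop :=
  ∀ P ∈ D, ∀ Q ∈ D, (∀ a b : X, P.marginW a b = Q.marginW a b) → F P = F Q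

/-- Head-to-head voting rule: outcome determined by the strict preference,
indifference, and noncomparability counting functions. -/
def HeadToHeadW (D : Set (Profile V X)) (F : Profile V X → α) : Prop :=
  ∀ P ∈ D, ∀ Q ∈ D,
    (∀ a b : X, P.countP a b = Q.countP a b) →
    (∀ a b : X, P.countI a b = Q.countI a b) →
    (∀ a b : X, P.countN a b = Q.countN a b) → F P = F Q

/-- Nonlinear Neutral Reversal: adding a reversal pair of (arbitrary) ballots
does not change the outcome. -/
def NonlinearNeutralReversalW (D : Set (Profile V X)) (F : Profile V X → α) : Prop :=
  ∀ P ∈ D, ∀ i j : V, i ∉ P.voters → j ∉ P.voters → i ≠ j →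
    ∀ R : X → X → Prop,
    (P.addVoter i R).addVoter j (fun a b => R b a) ∈ D →
    F P = F ((P.addVoter i R).addVoter j (fun a b => R b a))

/-- Neutral Self-Reversal: adding a voter with a self-reversing ballot does
not change the outcome. -/
def NeutralSelfReversal (D : Set (Profile V X)) (F : Profile V X → α) : Prop :=
  ∀ P ∈ D, ∀ i : V, i ∉ P.voters → ∀ R : X → X → Prop,
    (∀ a b, R a b ↔ R b a) → P.addVoter i R ∈ D →
    F P = F (P.addVoter i R)

/-- A weak linear order: reflexive, transitive, total, antisymmetric. -/
def IsWLin (R : X → X → Prop) : Prop :=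
  Reflexive R ∧ Transitive R ∧ (∀ a b, R a b ∨ R b a) ∧
    ∀ a b, R a b → R b a → a = b

/-- Neutral Reversal for weak-preference ballots: adding a reversal pair of
(weak) linear ballots does not change the outcome. -/
def NeutralReversalW (D : Set (Profile V X)) (F : Profile V X → α) : Prop :=
  ∀ P ∈ D, ∀ i j : V, i ∉ P.voters → j ∉ P.voters → i ≠ j →
    ∀ R : X → X → Prop, IsWLin R →
    (P.addVoter i R).addVoter j (fun a b => R b a) ∈ D →
    F P = F ((P.addVoter i R).addVoter j (fun a b => R b a))

/-- `x` is ranked immediately above `y` in the weak relation `R`. -/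
def ImmAboveW (R : X → X → Prop) (x y : X) : Prop :=
  sPref R x y ∧ ∀ z, ¬ (sPref R x z ∧ sPref R z y)

/-- Flip the adjacent pair in a weak relation. -/
def flipW (R : X → X → Prop) (x y : X) : X → X → Prop := fun a b =>
  if a = x ∧ b = y then False else if a = y ∧ b = x then True else R a b

/-- Voter `i` switches from ranking `x` immediately above `y` to ranking `y`
immediately above `x`. -/
def Profile.flipAtW (P : Profile V X) (i : V) (x y : X) : Profile V X :=
  P.updBallot i (flipW (P.ballot i) x y)

/-- Preferential Equality for weak-preference ballots. -/
def PrefEqualW (D : Set (Profile V X)) (F : Profile V X → α) : Prop :=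
  ∀ P ∈ D, ∀ x y : X, ∀ i ∈ P.voters, ∀ j ∈ P.voters, i ≠ j →
    ImmAboveW (P.ballot i) x y → ImmAboveW (P.ballot j) x y →
    P.flipAtW i x y ∈ D → P.flipAtW j x y ∈ D →
    F (P.flipAtW i x y) = F (P.flipAtW j x y)

/-- `L` is a strict linear order on the set `S`. -/
def StrictLinOnSet (L : X → X → Prop) (S : Set X) : Prop :=
  (∀ a ∈ S, ¬ L a a) ∧
    (∀ a ∈ S, ∀ b ∈ S, ∀ c ∈ S, L a b → L b c → L a c) ∧
    ∀ a ∈ S, ∀ b ∈ S, a ≠ b → L a b ∨ L b a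

/-- Rank all candidates of `S` above the rest, ordering `S` by `L`. -/
def raiseSide (R : X → X → Prop) (S : Set X) (L : X → X → Prop) :
    X → X → Prop := fun a b =>
  if a ∈ S ∧ b ∈ S then a = b ∨ L a b
  else if a ∈ S ∧ b ∉ S then True
  else if a ∉ S ∧ b ∈ S then False
  else R a b

/-- Rank all candidates of `S` below the rest, ordering `S` by `L⁻¹`. -/
def lowerSide (R : X → X → Prop) (S : Set X) (L : X → X → Prop) :
    X → X → Prop := fun a b =>
  if a ∈ S ∧ b ∈ S then a = b ∨ L b a
  else if a ∈ S ∧ b ∉ S then False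
  else if a ∉ S ∧ b ∈ S then True
  else R a b

/-- Comparable Compensation. -/
def ComparableComp (D : Set (Profile V X)) (F : Profile V X → α) : Prop :=
  ∀ P ∈ D, ∀ i ∈ P.voters, ∀ j ∈ P.voters, i ≠ j →
    P.ballot i = P.ballot j → (sideClass (P.ballot i)).Nonempty →
    ∀ L : X → X → Prop, StrictLinOnSet L (sideClass (P.ballot i)) →
    (P.updBallot i (raiseSide (P.ballot i) (sideClass (P.ballot i)) L)).updBallot j
      (lowerSide (P.ballot j) (sideClass (P.ballot j)) L) ∈ D →
    F P = F ((P.updBallot i (raiseSide (P.ballot i) (sideClass (P.ballot i)) L)).updBallot j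
      (lowerSide (P.ballot j) (sideClass (P.ballot j)) L))

/-! ### Auxiliary development for Statement 18 -/

namespace Stmt18Aux

variable {V X α : Type*}

/-- Reversal of a relation. -/
def flipRel (R : X → X → Prop) : X → X → Prop := fun a b => R b a

/-- Ballot with a single strict preference `a ≻ b`, everything else
noncomparable. -/
def pairRel (a b : X) : X → X → Prop := fun x y => x = y ∨ (x = a ∧ y = b)

/-- Self-reversing ballot with a single indifference between `a` and `b`. -/
def indRel (a b : X) : X → X → Prop := fun x y =>
  x = y ∨ (x = a ∧ y = b) ∨ (x = b ∧ y = a)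

/-- Self-reversing totally-noncomparable ballot. -/
def eqRel : X → X → Prop := fun x y => x = y

lemma sPref_flip (R : X → X → Prop) (a b : X) :
    sPref (flipRel R) a b ↔ sPref R b a := Iff.rfl

lemma sIndiff_flip (R : X → X → Prop) (a b : X) :
    sIndiff (flipRel R) a b ↔ sIndiff R b a := by
  unfold sIndiff flipRel; tauto

lemma sIndiff_symm (R : X → X → Prop) (a b : X) :
    sIndiff R a b ↔ sIndiff R b a := and_comm

lemma sPref_irrefl (R : X → X → Prop) (a : X) : ¬ sPref R a a := fun h => h.2 h.1

lemma sPref_pairRel {a b x y : X} :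
    sPref (pairRel a b) x y ↔ x ≠ y ∧ x = a ∧ y = b := by
  constructor
  · rintro ⟨h1, h2⟩
    have hyx : y ≠ x := fun h => h2 (Or.inl h)
    rcases h1 with h | ⟨rfl, rfl⟩
    · exact absurd h.symm hyx
    · exact ⟨fun h => hyx h.symm, rfl, rfl⟩
  · rintro ⟨hxy, rfl, rfl⟩
    refine ⟨Or.inr ⟨rfl, rfl⟩, ?_⟩
    rintro (h | ⟨rfl, h2⟩)
    · exact hxy h.symm
    · exact hxy h2.symm

lemma sIndiff_pairRel {a b x y : X} :
    sIndiff (pairRel a b) x y ↔ x = y := by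
  unfold sIndiff pairRel
  constructor
  · rintro ⟨h1 | ⟨rfl, rfl⟩, h2 | h3⟩ <;> tauto
  · rintro rfl; tauto

lemma sPref_indRel {a b x y : X} : ¬ sPref (indRel a b) x y := by
  unfold sPref indRel; tauto

lemma sIndiff_indRel {a b x y : X} :
    sIndiff (indRel a b) x y ↔ (x = y ∨ (x = a ∧ y = b) ∨ (x = b ∧ y = a)) := by
  unfold sIndiff indRel; tauto

lemma sPref_eqRel {x y : X} : ¬ sPref eqRel x y := by
  unfold sPref eqRel; tauto

lemma sIndiff_eqRel {x y : X} : sIndiff eqRel x y ↔ x = y := by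
  unfold sIndiff eqRel; tauto

lemma indRel_selfRev (a b : X) : ∀ x y, indRel a b x y ↔ indRel a b y x := by
  unfold indRel; intro x y; constructor <;> (intro h; tauto)

lemma eqRel_selfRev : ∀ x y : X, eqRel x y ↔ eqRel y x := by
  unfold eqRel; intro x y; constructor <;> (intro h; exact h.symm)

lemma isWOSN_flip {R : X → X → Prop} (h : IsWOSN R) : IsWOSN (flipRel R) := by
  obtain ⟨h1, h2, h3⟩ := h
  refine ⟨fun x => h1 x, fun x y z hxy hyz => h2 hyz hxy, fun x y hx hy => ?_⟩
  have hside : sideClass (flipRel R) = sideClass R := by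
    ext z; unfold sideClass sNoncomp flipRel; simp only [Set.mem_setOf_eq]
    exact forall_congr' fun w => imp_congr Iff.rfl and_comm
  rw [hside] at hx hy
  rcases h3 x y hx hy with h | h
  · exact Or.inr h
  · exact Or.inl h

lemma isWOSN_pairRel (a b : X) : IsWOSN (pairRel a b) := by
  refine ⟨fun x => Or.inl rfl, ?_, ?_⟩
  · rintro x y z (rfl | ⟨rfl, rfl⟩) (rfl | ⟨rfl, rfl⟩) <;> tauto
  · intro x y hx hy
    by_cases hab : a = b
    · exfalso; apply hx; intro z hz
      subst hab
      constructor
      · rintro (h | ⟨rfl, rfl⟩) <;> [exact hz h.symm; exact hz rfl]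
      · rintro (h | ⟨rfl, rfl⟩) <;> [exact hz h; exact hz rfl]
    · -- every z ∉ {a,b} is in the side class
      have hmem : ∀ z : X, z ≠ a → z ≠ b → z ∈ sideClass (pairRel a b) := by
        intro z hza hzb w hwz
        constructor
        · rintro (h | ⟨rfl, rfl⟩) <;> [exact hwz h.symm; exact hza rfl]
        · rintro (h | ⟨rfl, rfl⟩) <;> [exact hwz h; exact hzb rfl]
      have hx' : x = a ∨ x = b := by
        by_contra h; push_neg at h; exact hx (hmem x h.1 h.2)
      have hy' : y = a ∨ y = b := by
        by_contra h; push_neg at h; exact hy (hmem y h.1 h.2)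
      rcases hx' with rfl | rfl <;> rcases hy' with rfl | rfl <;>
        unfold pairRel <;> tauto

lemma isWOSN_indRel (a b : X) : IsWOSN (indRel a b) := by
  refine ⟨fun x => Or.inl rfl, ?_, ?_⟩
  · intro x y z hxy hyz
    rcases hxy with rfl | ⟨rfl, rfl⟩ | ⟨rfl, rfl⟩ <;>
      rcases hyz with rfl | ⟨h, rfl⟩ | ⟨h, rfl⟩ <;>
      unfold indRel <;> subst_vars <;> tauto
  · intro x y hx hy
    have hmem : ∀ z : X, z ≠ a → z ≠ b → z ∈ sideClass (indRel a b) := by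
      intro z hza hzb w hwz
      constructor
      · rintro (h | ⟨rfl, rfl⟩ | ⟨rfl, rfl⟩) <;>
          [exact hwz h.symm; exact hza rfl; exact hzb rfl]
      · rintro (h | ⟨rfl, rfl⟩ | ⟨rfl, rfl⟩) <;>
          [exact hwz h; exact hzb rfl; exact hza rfl]
    have hx' : x = a ∨ x = b := by
      by_contra h; push_neg at h; exact hx (hmem x h.1 h.2)
    have hy' : y = a ∨ y = b := by
      by_contra h; push_neg at h; exact hy (hmem y h.1 h.2)
    rcases hx' with rfl | rfl <;> rcases hy' with rfl | rfl <;>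
      unfold indRel <;> tauto

lemma isWOSN_eqRel : IsWOSN (eqRel : X → X → Prop) := by
  refine ⟨fun x => rfl, ?_, ?_⟩
  · rintro x y z rfl rfl; rfl
  · intro x y hx
    exfalso; apply hx
    intro w hwx
    exact ⟨fun h => hwx h.symm, fun h => hwx h⟩

end Stmt18Aux
namespace Stmt18Aux

section ProfileMachinery

variable {V X α : Type*}

/-- The multiset of ballots of a profile. -/
def ballots (P : Profile V X) : Multiset (X → X → Prop) :=
  P.voters.val.map P.ballot

lemma mem_ballots {P : Profile V X} {R : X → X → Prop} :
    R ∈ ballots P ↔ ∃ i ∈ P.voters, P.ballot i = R := by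
  unfold ballots
  simp [Multiset.mem_map]

lemma ballots_addVoter (P : Profile V X) {i : V} (hi : i ∉ P.voters)
    (R : X → X → Prop) : ballots (P.addVoter i R) = R ::ₘ ballots P := by
  unfold ballots Profile.addVoter
  simp only
  rw [Finset.insert_val_of_notMem hi, Multiset.map_cons, Function.update_self]
  congr 1
  apply Multiset.map_congr rfl
  intro j hj
  refine Function.update_of_ne (fun h => hi ?_) R P.ballot
  rw [← h]; exact hj

lemma mem_WOSN_addVoter {P : Profile V X} (hP : P ∈ WOSNProfiles V X) {i : V}
    {R : X → X → Prop} (hR : IsWOSN R) : P.addVoter i R ∈ WOSNProfiles V X := by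
  refine ⟨Finset.insert_nonempty _ _, ?_⟩
  intro j hj
  by_cases h : j = i
  · subst h; simpa [Profile.addVoter, Function.update_self] using hR
  · have hj' : j ∈ P.voters := by
      rcases Finset.mem_insert.mp hj with h' | h'
      · exact absurd h' h
      · exact h'
    simpa [Profile.addVoter, Function.update_of_ne h] using hP.2 j hj'

lemma ballots_WOSN {P : Profile V X} (hP : P ∈ WOSNProfiles V X)
    {R : X → X → Prop} (hR : R ∈ ballots P) : IsWOSN R := by
  rcases mem_ballots.mp hR with ⟨i, hi, rfl⟩
  exact hP.2 i hi

variable [Infinite V]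

/-- A fresh voter not in `s`. -/
noncomputable def fresh (s : Finset V) : V :=
  (Infinite.exists_notMem_finset s).choose

lemma fresh_not_mem (s : Finset V) : fresh s ∉ s :=
  (Infinite.exists_notMem_finset s).choose_spec

/-- Add a single fresh voter with ballot `R`. -/
noncomputable def add1 (P : Profile V X) (R : X → X → Prop) : Profile V X :=
  P.addVoter (fresh P.voters) R

/-- Add a fresh pair of voters with ballots `R` and its reversal. -/
noncomputable def add2 (P : Profile V X) (R : X → X → Prop) : Profile V X :=
  (P.addVoter (fresh P.voters) R).addVoter
    (fresh (P.addVoter (fresh P.voters) R).voters) (fun a b => R b a)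

lemma ballots_add1 (P : Profile V X) (R : X → X → Prop) :
    ballots (add1 P R) = R ::ₘ ballots P :=
  ballots_addVoter P (fresh_not_mem _) R

lemma ballots_add2 (P : Profile V X) (R : X → X → Prop) :
    ballots (add2 P R) = flipRel R ::ₘ R ::ₘ ballots P := by
  unfold add2
  rw [ballots_addVoter _ (fresh_not_mem _),
    ballots_addVoter P (fresh_not_mem _) R]
  rfl

lemma mem_add1 {P : Profile V X} (hP : P ∈ WOSNProfiles V X)
    {R : X → X → Prop} (hR : IsWOSN R) : add1 P R ∈ WOSNProfiles V X :=
  mem_WOSN_addVoter hP hR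

lemma mem_add2 {P : Profile V X} (hP : P ∈ WOSNProfiles V X)
    {R : X → X → Prop} (hR : IsWOSN R) : add2 P R ∈ WOSNProfiles V X :=
  mem_WOSN_addVoter (mem_WOSN_addVoter hP hR) (isWOSN_flip hR)

lemma F_add1 {F : Profile V X → α} (hN : NeutralSelfReversal (WOSNProfiles V X) F)
    {P : Profile V X} (hP : P ∈ WOSNProfiles V X) {R : X → X → Prop} (hR : IsWOSN R)
    (hs : ∀ a b, R a b ↔ R b a) : F P = F (add1 P R) :=
  hN P hP _ (fresh_not_mem _) R hs (mem_add1 hP hR)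

lemma F_add2 {F : Profile V X → α} (hN : NonlinearNeutralReversalW (WOSNProfiles V X) F)
    {P : Profile V X} (hP : P ∈ WOSNProfiles V X) {R : X → X → Prop} (hR : IsWOSN R) :
    F P = F (add2 P R) := by
  have hj := fresh_not_mem (P.addVoter (fresh P.voters) R).voters
  have hj' : fresh (P.addVoter (fresh P.voters) R).voters ∉ P.voters := by
    intro h; exact hj (Finset.mem_insert_of_mem h)
  have hij : fresh P.voters ≠ fresh (P.addVoter (fresh P.voters) R).voters := by
    intro h; exact hj (h ▸ Finset.mem_insert_self _ _)
  exact hN P hP _ _ (fresh_not_mem _) hj' hij R (mem_add2 hP hR)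

/-- Add a list of self-reversing ballots, each with a fresh voter. -/
noncomputable def addS (P : Profile V X) : List (X → X → Prop) → Profile V X
  | [] => P
  | R :: L => addS (add1 P R) L

/-- Add a list of reversal pairs of ballots, each pair with fresh voters. -/
noncomputable def addP2 (P : Profile V X) : List (X → X → Prop) → Profile V X
  | [] => P
  | R :: L => addP2 (add2 P R) L

lemma ballots_addS : ∀ (L : List (X → X → Prop)) (P : Profile V X),
    ballots (addS P L) = ballots P + ↑L
  | [], P => by simp [addS]
  | R :: L, P => by
      rw [addS, ballots_addS L, ballots_add1]
      rw [← Multiset.cons_coe, Multiset.add_cons, Multiset.cons_add]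

lemma ballots_addP2 : ∀ (L : List (X → X → Prop)) (P : Profile V X),
    ballots (addP2 P L) = ballots P + ↑L + ↑(L.map flipRel)
  | [], P => by simp [addP2]
  | R :: L, P => by
      rw [addP2, ballots_addP2 L, ballots_add2]
      simp only [List.map_cons]
      rw [← Multiset.cons_coe, ← Multiset.cons_coe]
      simp only [Multiset.add_cons, Multiset.cons_add]

lemma mem_addS : ∀ (L : List (X → X → Prop)) (P : Profile V X),
    P ∈ WOSNProfiles V X → (∀ R ∈ L, IsWOSN R) → addS P L ∈ WOSNProfiles V X
  | [], P, hP, _ => hP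
  | R :: L, P, hP, hL =>
      mem_addS L _ (mem_add1 hP (hL R (List.mem_cons_self)))
        fun S hS => hL S (List.mem_cons_of_mem _ hS)

lemma mem_addP2 : ∀ (L : List (X → X → Prop)) (P : Profile V X),
    P ∈ WOSNProfiles V X → (∀ R ∈ L, IsWOSN R) → addP2 P L ∈ WOSNProfiles V X
  | [], P, hP, _ => hP
  | R :: L, P, hP, hL =>
      mem_addP2 L _ (mem_add2 hP (hL R (List.mem_cons_self)))
        fun S hS => hL S (List.mem_cons_of_mem _ hS)

lemma F_addS {F : Profile V X → α} (hN : NeutralSelfReversal (WOSNProfiles V X) F) :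
    ∀ (L : List (X → X → Prop)) (P : Profile V X), P ∈ WOSNProfiles V X →
      (∀ R ∈ L, IsWOSN R ∧ ∀ a b, R a b ↔ R b a) → F P = F (addS P L)
  | [], P, hP, _ => rfl
  | R :: L, P, hP, hL => by
      have h1 := hL R (List.mem_cons_self)
      rw [F_add1 hN hP h1.1 h1.2]
      exact F_addS hN L _ (mem_add1 hP h1.1)
        fun S hS => hL S (List.mem_cons_of_mem _ hS)

lemma F_addP2 {F : Profile V X → α}
    (hN : NonlinearNeutralReversalW (WOSNProfiles V X) F) :
    ∀ (L : List (X → X → Prop)) (P : Profile V X), P ∈ WOSNProfiles V X →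
      (∀ R ∈ L, IsWOSN R) → F P = F (addP2 P L)
  | [], P, hP, _ => rfl
  | R :: L, P, hP, hL => by
      have h1 := hL R (List.mem_cons_self)
      rw [F_add2 hN hP h1]
      exact F_addP2 hN L _ (mem_add2 hP h1)
        fun S hS => hL S (List.mem_cons_of_mem _ hS)

end ProfileMachinery

end Stmt18Aux
namespace Stmt18Aux

section Counting

variable {V X α : Type*}

/-- Number of ballots in `m` strictly preferring `a` to `b`. -/
noncomputable def nP (m : Multiset (X → X → Prop)) (a b : X) : ℕ :=
  Multiset.countP (fun R => sPref R a b) m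

/-- Number of ballots in `m` indifferent between `a` and `b`. -/
noncomputable def nI (m : Multiset (X → X → Prop)) (a b : X) : ℕ :=
  Multiset.countP (fun R => sIndiff R a b) m

/-- Number of ballots in `m` finding `a` and `b` noncomparable. -/
noncomputable def nN (m : Multiset (X → X → Prop)) (a b : X) : ℕ :=
  Multiset.countP (fun R => sNoncomp R a b) m

lemma countP_profile (P : Profile V X) (a b : X) :
    P.countP a b = nP (ballots P) a b := by
  unfold Profile.countP nP ballots
  rw [Multiset.countP_map, Finset.card, Finset.filter_val]

lemma countI_profile (P : Profile V X) (a b : X) :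
    P.countI a b = nI (ballots P) a b := by
  unfold Profile.countI nI ballots
  rw [Multiset.countP_map, Finset.card, Finset.filter_val]

lemma countN_profile (P : Profile V X) (a b : X) :
    P.countN a b = nN (ballots P) a b := by
  unfold Profile.countN nN ballots
  rw [Multiset.countP_map, Finset.card, Finset.filter_val]

lemma countP_sum {ι : Type*} (p : (X → X → Prop) → Prop) (s : Finset ι)
    (f : ι → Multiset (X → X → Prop)) :
    Multiset.countP p (∑ i ∈ s, f i) = ∑ i ∈ s, Multiset.countP p (f i) :=
  map_sum (⟨⟨Multiset.countP p, Multiset.countP_zero p⟩,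
    Multiset.countP_add p⟩ : Multiset (X → X → Prop) →+ ℕ) f s

lemma card_sum {ι : Type*} (s : Finset ι) (f : ι → Multiset (X → X → Prop)) :
    Multiset.card (∑ i ∈ s, f i) = ∑ i ∈ s, Multiset.card (f i) :=
  map_sum (⟨⟨Multiset.card, rfl⟩, Multiset.card_add⟩ :
    Multiset (X → X → Prop) →+ ℕ) f s

lemma countP_replicate (p : (X → X → Prop) → Prop) (n : ℕ) (R : X → X → Prop) :
    Multiset.countP p (Multiset.replicate n R) = if p R then n else 0 := by
  induction n with
  | zero => simp
  | succ n ih =>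
      rw [Multiset.replicate_succ, Multiset.countP_cons, ih]
      split_ifs <;> omega

lemma nP_map_flip (m : Multiset (X → X → Prop)) (a b : X) :
    nP (m.map flipRel) a b = nP m b a := by
  unfold nP
  rw [Multiset.countP_map, ← Multiset.countP_eq_card_filter]
  exact Multiset.countP_congr rfl fun R _ => rfl

lemma nI_map_flip (m : Multiset (X → X → Prop)) (a b : X) :
    nI (m.map flipRel) a b = nI m b a := by
  unfold nI
  rw [Multiset.countP_map, ← Multiset.countP_eq_card_filter]
  exact Multiset.countP_congr rfl fun R _ => propext (sIndiff_flip R a b)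

lemma nI_symm (m : Multiset (X → X → Prop)) (a b : X) :
    nI m a b = nI m b a :=
  Multiset.countP_congr rfl fun R _ => propext (sIndiff_symm R a b)

lemma nP_diag (m : Multiset (X → X → Prop)) (a : X) : nP m a a = 0 :=
  Multiset.countP_eq_zero.mpr fun R _ => sPref_irrefl R a

lemma nI_diag (m : Multiset (X → X → Prop)) (href : ∀ R ∈ m, Reflexive R)
    (a : X) : nI m a a = Multiset.card m :=
  Multiset.countP_eq_card.mpr fun R hR => ⟨href R hR a, href R hR a⟩

lemma nN_diag (m : Multiset (X → X → Prop)) (href : ∀ R ∈ m, Reflexive R)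
    (a : X) : nN m a a = 0 :=
  Multiset.countP_eq_zero.mpr fun R hR h => h.1 (href R hR a)

lemma partition_count (m : Multiset (X → X → Prop)) (a b : X) :
    nP m a b + nP m b a + nI m a b + nN m a b = Multiset.card m := by
  induction m using Multiset.induction with
  | empty => simp [nP, nI, nN]
  | cons R s ih =>
      unfold nP nI nN at *
      simp only [Multiset.countP_cons, Multiset.card_cons]
      have key : (if sPref R a b then 1 else 0) + (if sPref R b a then 1 else 0)
          + (if sIndiff R a b then 1 else 0) + (if sNoncomp R a b then 1 else 0) = 1 := by
        by_cases h1 : R a b <;> by_cases h2 : R b a <;>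
          simp [sPref, sIndiff, sNoncomp, h1, h2]
      omega

end Counting

end Stmt18Aux
namespace Stmt18Aux

section Corrections

variable {X : Type*} [Fintype X]

/-- Correction multiset of single-strict-preference ballots with
multiplicities `c`. -/
noncomputable def corrM (c : X → X → ℕ) : Multiset (X → X → Prop) :=
  ∑ p : X × X, Multiset.replicate (c p.1 p.2) (pairRel p.1 p.2)

/-- Correction multiset of single-indifference ballots with
multiplicities `k`. -/
noncomputable def selfM (k : X → X → ℕ) : Multiset (X → X → Prop) :=
  ∑ p : X × X, Multiset.replicate (k p.1 p.2) (indRel p.1 p.2)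

lemma mem_corrM {c : X → X → ℕ} {R : X → X → Prop} (h : R ∈ corrM c) :
    ∃ a b, R = pairRel a b := by
  rcases Multiset.mem_sum.mp h with ⟨p, _, hp⟩
  exact ⟨p.1, p.2, Multiset.eq_of_mem_replicate hp⟩

lemma mem_selfM {k : X → X → ℕ} {R : X → X → Prop} (h : R ∈ selfM k) :
    ∃ a b, R = indRel a b := by
  rcases Multiset.mem_sum.mp h with ⟨p, _, hp⟩
  exact ⟨p.1, p.2, Multiset.eq_of_mem_replicate hp⟩

lemma card_corrM (c : X → X → ℕ) :
    Multiset.card (corrM c) = ∑ p : X × X, c p.1 p.2 := by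
  unfold corrM
  rw [card_sum]
  simp [Multiset.card_replicate]

lemma card_selfM (k : X → X → ℕ) :
    Multiset.card (selfM k) = ∑ p : X × X, k p.1 p.2 := by
  unfold selfM
  rw [card_sum]
  simp [Multiset.card_replicate]

lemma nP_corrM (c : X → X → ℕ) {x y : X} (hxy : x ≠ y) :
    nP (corrM c) x y = c x y := by
  unfold nP corrM
  rw [countP_sum]
  have h : ∀ p : X × X, p ∈ (Finset.univ : Finset (X × X)) →
      Multiset.countP (fun R => sPref R x y)
        (Multiset.replicate (c p.1 p.2) (pairRel p.1 p.2)) =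
      if p = (x, y) then c p.1 p.2 else 0 := by
    intro p _
    rw [countP_replicate]
    by_cases h : p = (x, y)
    · subst h
      rw [if_pos (sPref_pairRel.mpr ⟨hxy, rfl, rfl⟩), if_pos rfl]
    · rw [if_neg, if_neg h]
      intro hc
      rcases sPref_pairRel.mp hc with ⟨_, h1, h2⟩
      exact h (Prod.ext h1.symm h2.symm)
  rw [Finset.sum_congr rfl h, Finset.sum_ite_eq' Finset.univ (x, y)
    (fun p => c p.1 p.2)]
  simp

lemma nI_corrM (c : X → X → ℕ) {x y : X} (hxy : x ≠ y) :
    nI (corrM c) x y = 0 := by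
  apply Multiset.countP_eq_zero.mpr
  intro R hR hI
  rcases mem_corrM hR with ⟨a, b, rfl⟩
  exact hxy (sIndiff_pairRel.mp hI)

lemma nP_selfM (k : X → X → ℕ) (x y : X) : nP (selfM k) x y = 0 := by
  apply Multiset.countP_eq_zero.mpr
  intro R hR hI
  rcases mem_selfM hR with ⟨a, b, rfl⟩
  exact sPref_indRel hI

lemma nI_selfM (k : X → X → ℕ) {x y : X} (hxy : x ≠ y) :
    nI (selfM k) x y = k x y + k y x := by
  unfold nI selfM
  rw [countP_sum]
  have h : ∀ p : X × X, p ∈ (Finset.univ : Finset (X × X)) →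
      Multiset.countP (fun R => sIndiff R x y)
        (Multiset.replicate (k p.1 p.2) (indRel p.1 p.2)) =
      (if p = (x, y) then k p.1 p.2 else 0) +
        (if p = (y, x) then k p.1 p.2 else 0) := by
    intro p _
    rw [countP_replicate]
    by_cases h1 : p = (x, y)
    · subst h1
      rw [if_pos (sIndiff_indRel.mpr (Or.inr (Or.inl ⟨rfl, rfl⟩))), if_pos rfl,
        if_neg, add_zero]
      intro hc
      rw [Prod.ext_iff] at hc
      exact hxy hc.1
    · by_cases h2 : p = (y, x)
      · subst h2
        rw [if_pos (sIndiff_indRel.mpr (Or.inr (Or.inr ⟨rfl, rfl⟩))),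
          if_neg h1, if_pos rfl, zero_add]
      · rw [if_neg, if_neg h1, if_neg h2, add_zero]
        intro hc
        rcases sIndiff_indRel.mp hc with h | ⟨ha, hb⟩ | ⟨ha, hb⟩
        · exact hxy h
        · exact h1 (Prod.ext ha.symm hb.symm)
        · exact h2 (Prod.ext hb.symm ha.symm)
  rw [Finset.sum_congr rfl h, Finset.sum_add_distrib,
    Finset.sum_ite_eq' Finset.univ (x, y) (fun p => k p.1 p.2),
    Finset.sum_ite_eq' Finset.univ (y, x) (fun p => k p.1 p.2)]
  simp

lemma nP_replicate_eqRel (n : ℕ) (x y : X) :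
    nP (Multiset.replicate n (eqRel : X → X → Prop)) x y = 0 :=
  Multiset.countP_eq_zero.mpr fun R hR h =>
    sPref_eqRel (Multiset.eq_of_mem_replicate hR ▸ h)

lemma nI_replicate_eqRel (n : ℕ) {x y : X} (hxy : x ≠ y) :
    nI (Multiset.replicate n (eqRel : X → X → Prop)) x y = 0 :=
  Multiset.countP_eq_zero.mpr fun R hR h =>
    hxy (sIndiff_eqRel.mp (Multiset.eq_of_mem_replicate hR ▸ h))

end Corrections

end Stmt18Aux
namespace Stmt18Aux

section Main

variable {V X α : Type*}

lemma nP_add (m1 m2 : Multiset (X → X → Prop)) (x y : X) :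
    nP (m1 + m2) x y = nP m1 x y + nP m2 x y :=
  Multiset.countP_add _ _ _

lemma nI_add (m1 m2 : Multiset (X → X → Prop)) (x y : X) :
    nI (m1 + m2) x y = nI m1 x y + nI m2 x y :=
  Multiset.countP_add _ _ _

lemma marginW_eq (P : Profile V X) (a b : X) :
    P.marginW a b = (nP (ballots P) a b : ℤ) - (nP (ballots P) b a : ℤ) := by
  unfold Profile.marginW
  rw [countP_profile, countP_profile]

lemma forward [Fintype X] (F : Profile V X → α)
    (hMB : MarginBasedW (WOSNProfiles V X) F) :
    NeutralSelfReversal (WOSNProfiles V X) F ∧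
      NonlinearNeutralReversalW (WOSNProfiles V X) F := by
  constructor
  · intro P hP i hi R hsym hmem
    apply hMB P hP _ hmem
    intro a b
    have h1 : ¬ sPref R a b := fun h => h.2 ((hsym a b).mp h.1)
    have h2 : ¬ sPref R b a := fun h => h.2 ((hsym b a).mp h.1)
    rw [marginW_eq, marginW_eq, ballots_addVoter P hi R]
    unfold nP
    rw [Multiset.countP_cons, Multiset.countP_cons, if_neg h1, if_neg h2]
    simp
  · intro P hP i j hi hj hij R hmem
    apply hMB P hP _ hmem
    intro a b
    have hj' : j ∉ (P.addVoter i R).voters := by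
      simp only [Profile.addVoter, Finset.mem_insert]
      rintro (h | h)
      · exact hij h.symm
      · exact hj h
    rw [marginW_eq, marginW_eq, ballots_addVoter _ hj', ballots_addVoter P hi R]
    unfold nP
    rw [Multiset.countP_cons, Multiset.countP_cons, Multiset.countP_cons,
      Multiset.countP_cons]
    have e1 : (if sPref (fun a b => R b a) a b then 1 else 0) =
        (if sPref R b a then 1 else 0) := rfl
    have e2 : (if sPref (fun a b => R b a) b a then 1 else 0) =
        (if sPref R a b then 1 else 0) := rfl
    rw [e1, e2]
    push_cast
    ring

lemma backward [Infinite V] [Fintype X] (F : Profile V X → α)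
    (hH : HeadToHeadW (WOSNProfiles V X) F)
    (hNSR : NeutralSelfReversal (WOSNProfiles V X) F)
    (hNNR : NonlinearNeutralReversalW (WOSNProfiles V X) F) :
    MarginBasedW (WOSNProfiles V X) F := by
  intro P hP Q hQ hM
  have e := Fintype.equivFin X
  set mP := ballots P with hmP
  set mQ := ballots Q with hmQ
  have hM' : ∀ a b : X, (nP mP a b : ℤ) - (nP mP b a : ℤ) =
      (nP mQ a b : ℤ) - (nP mQ b a : ℤ) := by
    intro a b
    have := hM a b
    rwa [marginW_eq, marginW_eq] at this
  set cA : X → X → ℕ := fun a b =>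
    if e a < e b then nP mQ a b - nP mP a b else 0 with hcA
  set cB : X → X → ℕ := fun a b =>
    if e a < e b then nP mP a b - nP mQ a b else 0 with hcB
  set kA : X → X → ℕ := fun a b =>
    if e a < e b then nI mQ a b - nI mP a b else 0 with hkA
  set kB : X → X → ℕ := fun a b =>
    if e a < e b then nI mP a b - nI mQ a b else 0 with hkB
  set SA := Multiset.card mP + 2 * (∑ p : X × X, cA p.1 p.2)
    + (∑ p : X × X, kA p.1 p.2) with hSA
  set SB := Multiset.card mQ + 2 * (∑ p : X × X, cB p.1 p.2)
    + (∑ p : X × X, kB p.1 p.2) with hSB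
  set A := addS (addP2 P (corrM cA).toList)
    ((selfM kA + Multiset.replicate (SB - SA) eqRel).toList) with hA_def
  set B := addS (addP2 Q (corrM cB).toList)
    ((selfM kB + Multiset.replicate (SA - SB) eqRel).toList) with hB_def
  -- basic properties of the added ballots
  have hcorrW : ∀ c : X → X → ℕ, ∀ R ∈ (corrM c).toList, IsWOSN R := by
    intro c R hR
    rcases mem_corrM (Multiset.mem_toList.mp hR) with ⟨a, b, rfl⟩
    exact isWOSN_pairRel a b
  have hselfW : ∀ (k : X → X → ℕ) (n : ℕ),
      ∀ R ∈ (selfM k + Multiset.replicate n eqRel).toList,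
        IsWOSN R ∧ ∀ a b, R a b ↔ R b a := by
    intro k n R hR
    rcases Multiset.mem_add.mp (Multiset.mem_toList.mp hR) with h | h
    · rcases mem_selfM h with ⟨a, b, rfl⟩
      exact ⟨isWOSN_indRel a b, indRel_selfRev a b⟩
    · rw [Multiset.eq_of_mem_replicate h]
      exact ⟨isWOSN_eqRel, eqRel_selfRev⟩
  -- memberships
  have hA2 := mem_addP2 (corrM cA).toList P hP (hcorrW cA)
  have hB2 := mem_addP2 (corrM cB).toList Q hQ (hcorrW cB)
  have hA : A ∈ WOSNProfiles V X :=
    mem_addS _ _ hA2 fun R hR => (hselfW kA (SB - SA) R hR).1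
  have hB : B ∈ WOSNProfiles V X :=
    mem_addS _ _ hB2 fun R hR => (hselfW kB (SA - SB) R hR).1
  -- F is preserved
  have hFA : F P = F A :=
    (F_addP2 hNNR _ P hP (hcorrW cA)).trans
      (F_addS hNSR _ _ hA2 (hselfW kA (SB - SA)))
  have hFB : F Q = F B :=
    (F_addP2 hNNR _ Q hQ (hcorrW cB)).trans
      (F_addS hNSR _ _ hB2 (hselfW kB (SA - SB)))
  -- ballots of A and B
  have hmapA : (↑((corrM cA).toList.map flipRel) : Multiset (X → X → Prop))
      = (corrM cA).map flipRel := by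
    rw [← Multiset.map_coe, Multiset.coe_toList]
  have hmapB : (↑((corrM cB).toList.map flipRel) : Multiset (X → X → Prop))
      = (corrM cB).map flipRel := by
    rw [← Multiset.map_coe, Multiset.coe_toList]
  have hbA : ballots A = mP + corrM cA + (corrM cA).map flipRel
      + (selfM kA + Multiset.replicate (SB - SA) eqRel) := by
    rw [hA_def, ballots_addS, ballots_addP2, Multiset.coe_toList, hmapA, hmP, Multiset.coe_toList]
  have hbB : ballots B = mQ + corrM cB + (corrM cB).map flipRel
      + (selfM kB + Multiset.replicate (SA - SB) eqRel) := by
    rw [hB_def, ballots_addS, ballots_addP2, Multiset.coe_toList, hmapB, hmQ, Multiset.coe_toList]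
  -- count formulas off the diagonal
  have hnPA : ∀ x y : X, x ≠ y →
      nP (ballots A) x y = nP mP x y + cA x y + cA y x := by
    intro x y hxy
    rw [hbA, nP_add, nP_add, nP_add, nP_add, nP_corrM cA hxy, nP_map_flip,
      nP_corrM cA (Ne.symm hxy), nP_selfM, nP_replicate_eqRel]
    omega
  have hnPB : ∀ x y : X, x ≠ y →
      nP (ballots B) x y = nP mQ x y + cB x y + cB y x := by
    intro x y hxy
    rw [hbB, nP_add, nP_add, nP_add, nP_add, nP_corrM cB hxy, nP_map_flip,
      nP_corrM cB (Ne.symm hxy), nP_selfM, nP_replicate_eqRel]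
    omega
  have hnIA : ∀ x y : X, x ≠ y →
      nI (ballots A) x y = nI mP x y + kA x y + kA y x := by
    intro x y hxy
    rw [hbA, nI_add, nI_add, nI_add, nI_add, nI_corrM cA hxy, nI_map_flip,
      nI_corrM cA (Ne.symm hxy), nI_selfM kA hxy, nI_replicate_eqRel _ hxy]
    omega
  have hnIB : ∀ x y : X, x ≠ y →
      nI (ballots B) x y = nI mQ x y + kB x y + kB y x := by
    intro x y hxy
    rw [hbB, nI_add, nI_add, nI_add, nI_add, nI_corrM cB hxy, nI_map_flip,
      nI_corrM cB (Ne.symm hxy), nI_selfM kB hxy, nI_replicate_eqRel _ hxy]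
    omega
  -- cardinalities
  have hcardA : Multiset.card (ballots A) = SA + (SB - SA) := by
    rw [hbA]
    simp only [Multiset.card_add, Multiset.card_map, Multiset.card_replicate,
      card_corrM, card_selfM]
    rw [hSA]
    ring
  have hcardB : Multiset.card (ballots B) = SB + (SA - SB) := by
    rw [hbB]
    simp only [Multiset.card_add, Multiset.card_map, Multiset.card_replicate,
      card_corrM, card_selfM]
    rw [hSB]
    ring
  have hcard : Multiset.card (ballots A) = Multiset.card (ballots B) := by
    rw [hcardA, hcardB]; omega
  -- reflexivity of all ballots
  have hreflA : ∀ R ∈ ballots A, Reflexive R := fun R hR => (ballots_WOSN hA hR).1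
  have hreflB : ∀ R ∈ ballots B, Reflexive R := fun R hR => (ballots_WOSN hB hR).1
  -- trichotomy helper
  have htri : ∀ x y : X, x ≠ y → (e x < e y ∧ ¬ e y < e x) ∨ (e y < e x ∧ ¬ e x < e y) := by
    intro x y hxy
    rcases lt_trichotomy (e x) (e y) with h | h | h
    · exact Or.inl ⟨h, fun h' => absurd (lt_trans h h') (lt_irrefl _)⟩
    · exact absurd (e.injective h) hxy
    · exact Or.inr ⟨h, fun h' => absurd (lt_trans h h') (lt_irrefl _)⟩
  -- the three count equalities
  have hPeq : ∀ x y : X, nP (ballots A) x y = nP (ballots B) x y := by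
    intro x y
    by_cases hxy : x = y
    · subst hxy; rw [nP_diag, nP_diag]
    · rw [hnPA x y hxy, hnPB x y hxy]
      have hm := hM' x y
      rcases htri x y hxy with ⟨h1, h2⟩ | ⟨h1, h2⟩ <;>
        simp only [hcA, hcB, if_pos h1, if_neg h2] <;> omega
  have hIeq : ∀ x y : X, nI (ballots A) x y = nI (ballots B) x y := by
    intro x y
    by_cases hxy : x = y
    · subst hxy; rw [nI_diag _ hreflA, nI_diag _ hreflB, hcard]
    · rw [hnIA x y hxy, hnIB x y hxy]
      have hsP : nI mP x y = nI mP y x := nI_symm mP x y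
      have hsQ : nI mQ x y = nI mQ y x := nI_symm mQ x y
      rcases htri x y hxy with ⟨h1, h2⟩ | ⟨h1, h2⟩ <;>
        simp only [hkA, hkB, if_pos h1, if_neg h2] <;> omega
  have hNeq : ∀ x y : X, nN (ballots A) x y = nN (ballots B) x y := by
    intro x y
    by_cases hxy : x = y
    · subst hxy; rw [nN_diag _ hreflA, nN_diag _ hreflB]
    · have pA := partition_count (ballots A) x y
      have pB := partition_count (ballots B) x y
      have h1 := hPeq x y
      have h2 := hPeq y x
      have h3 := hIeq x y
      omega
  -- conclude via head-to-head
  rw [hFA, hFB]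
  apply hH A hA B hB
  · intro a b; rw [countP_profile, countP_profile]; exact hPeq a b
  · intro a b; rw [countI_profile, countI_profile]; exact hIeq a b
  · intro a b; rw [countN_profile, countN_profile]; exact hNeq a b

end Main

end Stmt18Aux

/-- a head-to-head voting rule on the WOSN domain is
margin-based iff it satisfies Neutral Self-Reversal and Nonlinear Neutral
Reversal. -/
theorem stmt18 [Infinite V] [Fintype X] (F : Profile V X → α)
    (hH : HeadToHeadW (WOSNProfiles V X) F) :
    MarginBasedW (WOSNProfiles V X) F ↔
      NeutralSelfReversal (WOSNProfiles V X) F ∧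
        NonlinearNeutralReversalW (WOSNProfiles V X) F := by
  constructor
  · intro hMB
    exact Stmt18Aux.forward F hMB
  · rintro ⟨h1, h2⟩
    exact Stmt18Aux.backward F hH h1 h2

end
end

section
/- Let F be a head-to-head and homogeneous voting rule whose domain is either LOSN or WOSN. Then F is margin-based if and only if F satisfies Nonlinear Neutral Reversal. -/
/- Formalization of voting with weak-preference ballots (binary relations
allowing noncomparability).  A profile assigns to each voter in a finite
voter set a binary (weak preference) relation on the candidate set `X`. -/

open scoped Classical

noncomputable section

variable {V X α : Type*}

/- ------------------- Auxiliary material for stmt19 ------------------- -/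

section Stmt19Aux

variable {B : (X → X → Prop) → Prop}

/-- Domain determined by a ballot property. -/
def ballotDom (B : (X → X → Prop) → Prop) : Set (Profile V X) :=
  {P | P.voters.Nonempty ∧ ∀ i ∈ P.voters, B (P.ballot i)}

/-- Generic counting function. -/
def cardQ (P : Profile V X) (q : (X → X → Prop) → Prop) : ℕ :=
  (P.voters.filter fun k => q (P.ballot k)).card

lemma countI_comm (P : Profile V X) (a b : X) : P.countI a b = P.countI b a := by
  unfold Profile.countI
  congr 1
  exact Finset.filter_congr fun k _ =>
    ⟨fun h => ⟨h.2, h.1⟩, fun h => ⟨h.2, h.1⟩⟩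

lemma countN_comm (P : Profile V X) (a b : X) : P.countN a b = P.countN b a := by
  unfold Profile.countN
  congr 1
  exact Finset.filter_congr fun k _ =>
    ⟨fun h => ⟨h.2, h.1⟩, fun h => ⟨h.2, h.1⟩⟩

lemma cardQ_addVoter (P : Profile V X) {i : V} (h : i ∉ P.voters)
    (R : X → X → Prop) (q : (X → X → Prop) → Prop) :
    cardQ (P.addVoter i R) q = cardQ P q + (if q R then 1 else 0) := by
  unfold cardQ Profile.addVoter
  simp only
  rw [Finset.filter_insert]
  have hcong : (P.voters.filter fun k => q (Function.update P.ballot i R k))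
      = P.voters.filter fun k => q (P.ballot k) :=
    Finset.filter_congr fun k hk => by
      rw [Function.update_of_ne (by rintro rfl; exact h hk)]
  simp only [Function.update_self]
  by_cases hq : q R
  · rw [if_pos hq, if_pos hq,
      Finset.card_insert_of_notMem (fun hmem => h (Finset.mem_filter.mp hmem).1), hcong]
  · rw [if_neg hq, if_neg hq, hcong]; omega

lemma mem_ballotDom_addVoter {P : Profile V X} (hP : P ∈ ballotDom B) (i : V)
    {R : X → X → Prop} (hR : B R) : P.addVoter i R ∈ ballotDom B := by
  refine ⟨Finset.insert_nonempty _ _, fun k hk => ?_⟩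
  by_cases hki : k = i
  · subst hki
    simpa [Profile.addVoter, Function.update_self] using hR
  · rcases Finset.mem_insert.mp hk with h | h
    · exact absurd h hki
    · simpa [Profile.addVoter, Function.update_of_ne hki] using hP.2 k h

lemma cardQ_double [Nonempty V] (P : Profile V X) (φ : V → V)
    (hinj : Function.Injective φ) (hfr : ∀ i, φ i ∉ P.voters)
    (q : (X → X → Prop) → Prop) :
    cardQ (P.double φ) q = 2 * cardQ P q := by
  unfold cardQ Profile.double
  simp only
  rw [Finset.filter_union]
  have h1 : (P.voters.filter fun k =>
      q (if k ∈ P.voters then P.ballot k else P.ballot (Function.invFun φ k)))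
      = P.voters.filter fun k => q (P.ballot k) :=
    Finset.filter_congr fun k hk => by rw [if_pos hk]
  have h2 : ((P.voters.image φ).filter fun k =>
      q (if k ∈ P.voters then P.ballot k else P.ballot (Function.invFun φ k)))
      = (P.voters.filter fun k => q (P.ballot k)).image φ := by
    rw [Finset.filter_image]
    congr 1
    exact Finset.filter_congr fun k hk => by
      rw [if_neg (hfr k), Function.leftInverse_invFun hinj k]
  rw [h1, h2, Finset.card_union_of_disjoint, Finset.card_image_of_injective _ hinj]
  · ring
  · rw [Finset.disjoint_left]
    intro a ha hb
    obtain ⟨m, _, rfl⟩ := Finset.mem_image.mp hb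
    exact hfr m (Finset.mem_filter.mp ha).1

lemma mem_ballotDom_double [Nonempty V] {P : Profile V X} (hP : P ∈ ballotDom B)
    {φ : V → V} (hinj : Function.Injective φ) (hfr : ∀ i, φ i ∉ P.voters) :
    P.double φ ∈ ballotDom B := by
  obtain ⟨⟨v, hv⟩, hB⟩ := hP
  refine ⟨⟨v, Finset.mem_union_left _ hv⟩, fun k hk => ?_⟩
  show B (if k ∈ P.voters then P.ballot k else P.ballot (Function.invFun φ k))
  by_cases h : k ∈ P.voters
  · rw [if_pos h]; exact hB k h
  · rw [if_neg h]
    rcases Finset.mem_union.mp hk with h' | h'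
    · exact absurd h' h
    · obtain ⟨m, hm, rfl⟩ := Finset.mem_image.mp h'
      rw [Function.leftInverse_invFun hinj m]
      exact hB m hm

/-- A fresh voter not in `s`. -/
def freshV [Infinite V] (s : Finset V) : V :=
  (Infinite.exists_notMem_finset s).choose

lemma freshV_spec [Infinite V] (s : Finset V) : freshV s ∉ s :=
  (Infinite.exists_notMem_finset s).choose_spec

/-- Add a reversal pair of ballots with fresh voters. -/
def addPair [Infinite V] (P : Profile V X) (R : X → X → Prop) : Profile V X :=
  (P.addVoter (freshV P.voters) R).addVoter
    (freshV (insert (freshV P.voters) P.voters)) fun a b => R b a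

/-- Add a list of reversal pairs. -/
def addPairs [Infinite V] (P : Profile V X) : List (X → X → Prop) → Profile V X
  | [] => P
  | R :: rs => addPairs (addPair P R) rs

lemma cardQ_addPair [Infinite V] (P : Profile V X) (R : X → X → Prop)
    (q : (X → X → Prop) → Prop) :
    cardQ (addPair P R) q = cardQ P q +
      ((if q R then 1 else 0) + (if q (fun a b => R b a) then 1 else 0)) := by
  unfold addPair
  rw [cardQ_addVoter _ (by
      have := freshV_spec (insert (freshV P.voters) P.voters)
      simpa [Profile.addVoter] using this),
    cardQ_addVoter _ (freshV_spec P.voters)]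
  ring

lemma mem_ballotDom_addPair [Infinite V]
    (hrev : ∀ R, B R → B fun a b => R b a) {P : Profile V X}
    (hP : P ∈ ballotDom B) {R : X → X → Prop} (hR : B R) :
    addPair P R ∈ ballotDom B :=
  mem_ballotDom_addVoter (mem_ballotDom_addVoter hP _ hR) _ (hrev R hR)

lemma cardQ_addPairs [Infinite V] (q : (X → X → Prop) → Prop) :
    ∀ (rs : List (X → X → Prop)) (P : Profile V X),
      cardQ (addPairs P rs) q = cardQ P q +
        (rs.map fun R =>
          (if q R then 1 else 0) + (if q (fun a b => R b a) then 1 else 0)).sum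
  | [], P => by simp [addPairs]
  | R :: rs, P => by
      rw [addPairs, cardQ_addPairs q rs (addPair P R), cardQ_addPair,
        List.map_cons, List.sum_cons]
      ring

lemma mem_ballotDom_addPairs [Infinite V]
    (hrev : ∀ R, B R → B fun a b => R b a) :
    ∀ (rs : List (X → X → Prop)) (P : Profile V X), P ∈ ballotDom B →
      (∀ R ∈ rs, B R) → addPairs P rs ∈ ballotDom B
  | [], P, hP, _ => hP
  | R :: rs, P, hP, hB =>
      mem_ballotDom_addPairs hrev rs (addPair P R)
        (mem_ballotDom_addPair hrev hP (hB R (List.mem_cons_self)))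
        (fun S hS => hB S (List.mem_cons_of_mem _ hS))

lemma F_addPairs [Infinite V] (F : Profile V X → α)
    (hNNR : NonlinearNeutralReversalW (ballotDom B) F)
    (hrev : ∀ R, B R → B fun a b => R b a) :
    ∀ (rs : List (X → X → Prop)) (P : Profile V X), P ∈ ballotDom B →
      (∀ R ∈ rs, B R) → F P = F (addPairs P rs)
  | [], _, _, _ => rfl
  | R :: rs, P, hP, hB => by
      have hR : B R := hB R (List.mem_cons_self)
      have hi : freshV P.voters ∉ P.voters := freshV_spec P.voters
      have hj : freshV (insert (freshV P.voters) P.voters)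
          ∉ insert (freshV P.voters) P.voters := freshV_spec _
      have h1 : F P = F (addPair P R) :=
        hNNR P hP _ _ hi (fun h => hj (Finset.mem_insert_of_mem h))
          (fun h => hj (h ▸ Finset.mem_insert_self _ _))
          R (mem_ballotDom_addPair hrev hP hR)
      rw [addPairs]
      exact h1.trans (F_addPairs F hNNR hrev rs (addPair P R)
        (mem_ballotDom_addPair hrev hP hR)
        (fun S hS => hB S (List.mem_cons_of_mem _ hS)))

lemma exists_fresh_inj [Infinite V] (s : Finset V) :
    ∃ φ : V → V, Function.Injective φ ∧ ∀ i, φ i ∉ s := by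
  have h1 : (Cardinal.mk (↑s : Set V)) < Cardinal.mk V :=
    lt_of_lt_of_le (s.finite_toSet.lt_aleph0) (Cardinal.aleph0_le_mk V)
  have h2 := Cardinal.mk_compl_of_infinite (↑s : Set V) h1
  obtain ⟨e⟩ := Cardinal.eq.mp h2.symm
  refine ⟨fun v => (e v).val, fun x y h => e.injective (Subtype.val_injective h), ?_⟩
  intro i hm
  exact (e i).2 (Finset.mem_coe.mpr hm)

lemma sum_indicators [Infinite V] (Q : Profile V X) (q : (X → X → Prop) → Prop) :
    ((Q.voters.toList.map Q.ballot).map fun R =>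
        (if q R then 1 else 0) + (if q (fun a b => R b a) then 1 else 0)).sum
      = cardQ Q q + cardQ Q (fun R => q (fun a b => R b a)) := by
  rw [List.map_map, Finset.sum_map_toList]
  unfold cardQ
  rw [Finset.card_filter, Finset.card_filter, ← Finset.sum_add_distrib]
  rfl

lemma ballots_mem [Infinite V] {Q : Profile V X} (hQ : Q ∈ ballotDom B) :
    ∀ R ∈ Q.voters.toList.map Q.ballot, B R := by
  intro R hR
  obtain ⟨k, hk, rfl⟩ := List.mem_map.mp hR
  exact hQ.2 k (Finset.mem_toList.mp hk)

lemma cardQ_combo [Infinite V] (P Q : Profile V X) {φ : V → V}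
    (hinj : Function.Injective φ) (hfr : ∀ i, φ i ∉ P.voters)
    (q : (X → X → Prop) → Prop) :
    cardQ (addPairs (P.double φ) (Q.voters.toList.map Q.ballot)) q
      = 2 * cardQ P q + (cardQ Q q + cardQ Q (fun R => q (fun a b => R b a))) := by
  rw [cardQ_addPairs, cardQ_double P φ hinj hfr, sum_indicators]

/-- Specialization of `cardQ_combo` to the three counting functions. -/
lemma combo_countP [Infinite V] (P Q : Profile V X) {φ : V → V}
    (hinj : Function.Injective φ) (hfr : ∀ i, φ i ∉ P.voters) (a b : X) :
    (addPairs (P.double φ) (Q.voters.toList.map Q.ballot)).countP a b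
      = 2 * P.countP a b + (Q.countP a b + Q.countP b a) :=
  cardQ_combo P Q hinj hfr (fun R => sPref R a b)

lemma combo_countI [Infinite V] (P Q : Profile V X) {φ : V → V}
    (hinj : Function.Injective φ) (hfr : ∀ i, φ i ∉ P.voters) (a b : X) :
    (addPairs (P.double φ) (Q.voters.toList.map Q.ballot)).countI a b
      = 2 * P.countI a b + (Q.countI a b + Q.countI b a) :=
  cardQ_combo P Q hinj hfr (fun R => sIndiff R a b)

lemma combo_countN [Infinite V] (P Q : Profile V X) {φ : V → V}
    (hinj : Function.Injective φ) (hfr : ∀ i, φ i ∉ P.voters) (a b : X) :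
    (addPairs (P.double φ) (Q.voters.toList.map Q.ballot)).countN a b
      = 2 * P.countN a b + (Q.countN a b + Q.countN b a) :=
  cardQ_combo P Q hinj hfr (fun R => sNoncomp R a b)

/-- Specialization of `cardQ_addVoter` to `countP`, for a ballot and its
reversal. -/
lemma countP_addVoter (P : Profile V X) {i : V} (h : i ∉ P.voters)
    (R : X → X → Prop) (a b : X) :
    (P.addVoter i R).countP a b = P.countP a b + (if sPref R a b then 1 else 0) :=
  cardQ_addVoter P h R (fun S => sPref S a b)

lemma countP_addVoter_rev (P : Profile V X) {j : V} (h : j ∉ P.voters)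
    (R : X → X → Prop) (a b : X) :
    (P.addVoter j fun x y => R y x).countP a b
      = P.countP a b + (if sPref R b a then 1 else 0) :=
  cardQ_addVoter P h _ (fun S => sPref S a b)

/-- Main abstract lemma. -/
lemma main_ballotDom [Infinite V] (F : Profile V X → α)
    (hrev : ∀ R : X → X → Prop, B R → B fun a b => R b a)
    (hH : HeadToHeadW (ballotDom B) F) (hhom : Homogeneous (ballotDom B) F) :
    MarginBasedW (ballotDom B) F ↔ NonlinearNeutralReversalW (ballotDom B) F := by
  constructor
  · intro hMB P hP i j hi hj hij R hmem
    apply hMB P hP _ hmem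
    intro a b
    have hj' : j ∉ (P.addVoter i R).voters := by
      simp [Profile.addVoter, Finset.mem_insert, hj, Ne.symm hij]
    have e : ∀ a b : X,
        ((P.addVoter i R).addVoter j fun x y => R y x).countP a b
          = P.countP a b +
            ((if sPref R a b then 1 else 0) + (if sPref R b a then 1 else 0)) := by
      intro a b
      rw [countP_addVoter_rev _ hj' R a b, countP_addVoter _ hi R a b]
      ring
    unfold Profile.marginW
    rw [e a b, e b a]
    push_cast
    ring
  · intro hNNR P hP Q hQ hm
    obtain ⟨φ, hφi, hφf⟩ := exists_fresh_inj P.voters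
    obtain ⟨ψ, hψi, hψf⟩ := exists_fresh_inj Q.voters
    have hdP : P.double φ ∈ ballotDom B := mem_ballotDom_double hP hφi hφf
    have hdQ : Q.double ψ ∈ ballotDom B := mem_ballotDom_double hQ hψi hψf
    have hBQ : ∀ R ∈ Q.voters.toList.map Q.ballot, B R := ballots_mem hQ
    have hBP : ∀ R ∈ P.voters.toList.map P.ballot, B R := ballots_mem hP
    have hA : addPairs (P.double φ) (Q.voters.toList.map Q.ballot) ∈ ballotDom B :=
      mem_ballotDom_addPairs hrev _ _ hdP hBQ
    have hB' : addPairs (Q.double ψ) (P.voters.toList.map P.ballot) ∈ ballotDom B :=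
      mem_ballotDom_addPairs hrev _ _ hdQ hBP
    have c1 : F P = F (addPairs (P.double φ) (Q.voters.toList.map Q.ballot)) :=
      (hhom P hP φ hφi hφf hdP).trans (F_addPairs F hNNR hrev _ _ hdP hBQ)
    have c2 : F Q = F (addPairs (Q.double ψ) (P.voters.toList.map P.ballot)) :=
      (hhom Q hQ ψ hψi hψf hdQ).trans (F_addPairs F hNNR hrev _ _ hdQ hBP)
    rw [c1, c2]
    apply hH _ hA _ hB'
    · intro a b
      rw [combo_countP P Q hφi hφf, combo_countP Q P hψi hψf]
      have h := hm a b
      unfold Profile.marginW at h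
      omega
    · intro a b
      rw [combo_countI P Q hφi hφf, combo_countI Q P hψi hψf,
        countI_comm Q b a, countI_comm P b a]
      omega
    · intro a b
      rw [combo_countN P Q hφi hφf, combo_countN Q P hψi hψf,
        countN_comm Q b a, countN_comm P b a]
      omega

lemma sideClass_swap (R : X → X → Prop) :
    sideClass (fun a b => R b a) = sideClass R := by
  ext x
  constructor <;> exact fun h y hy => ⟨(h y hy).2, (h y hy).1⟩

lemma isLOSN_swap {R : X → X → Prop} (h : IsLOSN R) :
    IsLOSN (fun a b => R b a) := by
  obtain ⟨hr, ht, hl⟩ := h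
  refine ⟨fun x => hr x, fun a b c hab hbc => ht hbc hab, ?_⟩
  intro x y hxy hx hy
  rw [sideClass_swap] at hx hy
  exact (hl x y hxy hx hy).symm

lemma isWOSN_swap {R : X → X → Prop} (h : IsWOSN R) :
    IsWOSN (fun a b => R b a) := by
  obtain ⟨hr, ht, hl⟩ := h
  refine ⟨fun x => hr x, fun a b c hab hbc => ht hbc hab, ?_⟩
  intro x y hx hy
  rw [sideClass_swap] at hx hy
  exact (hl x y hx hy).symm

end Stmt19Aux

/-- a head-to-head, homogeneous voting rule whose domain is
either LOSN or WOSN is margin-based iff it satisfies Nonlinear Neutral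
Reversal. -/
theorem stmt19 [Infinite V] [Fintype X] (F : Profile V X → α)
    (D : Set (Profile V X))
    (hD : D = LOSNProfiles V X ∨ D = WOSNProfiles V X)
    (hH : HeadToHeadW D F) (hhom : Homogeneous D F) :
    MarginBasedW D F ↔ NonlinearNeutralReversalW D F := by
  rcases hD with rfl | rfl
  · exact main_ballotDom F (fun R h => isLOSN_swap h) hH hhom
  · exact main_ballotDom F (fun R h => isWOSN_swap h) hH hhom

end
end
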